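/- arXiv:1601.02311 — 6 statements merged into one kernel-verified Lean document; each statement's English description precedes it below -/
import Mathlib

section
/- Let f : {0,1}^n → ℝ, let δ > 0, and let d be a nonnegative integer. Then there is NO family of real polynomials h_1,…,h_r in n variables, each of degree at most d, with Σ_{x ∈ {0,1}^n} |f(x) − Σ_j h_j(x)²| ≤ δ·2^n, if and only if there exists a witness function ψ : {0,1}^n → ℝ satisfying: (i) Σ_{x ∈ {0,1}^n} f(x)·ψ(x) > δ·2^n; (ii) Σ_{x ∈ {0,1}^n} p(x)²·ψ(x) ≤ 0 for every real polynomial p in n variables of degree at most d; and (iii) max_{x ∈ {0,1}^n} |ψ(x)| = 1. -/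
/-!
The functions on the cube that are sums of squares of polynomials of degree at most `d` form a
convex cone `C`. It is closed: by a Gram-matrix argument `dim W` squares of elements of the
space `W` of degree-`d` polynomial functions suffice, and the squaring map `W^{dim W} → C` is
proper because each square is dominated by the sum. So if no element of `C` is `ε`-close to `f`
in `ℓ¹`, then `f` lies outside the closed convex set `B + C`, with `B` the `ℓ¹` ball of radius
`ε`, and a hyperplane separates them. The separating functional `ψ` is `≤ 0` on the cone, and
its supremum over `B` is `ε ‖ψ‖∞`, attained at a signed multiple of a point mass; dividing by
`‖ψ‖∞` gives the witness. Conversely, any witness gives `⟨f, ψ⟩ ≤ ‖f - g‖₁ + ⟨g, ψ⟩ ≤ ε`.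
-/

open MvPolynomial

def bv {n : ℕ} (x : Fin n → Bool) (i : Fin n) : ℝ := if x i then 1 else 0

open Finset Matrix

theorem Matrix.exists_transpose_mul_self_eq {κ μ : Type*} [Fintype κ] [Fintype μ]
    [DecidableEq μ] (A : Matrix κ μ ℝ) : ∃ B : Matrix μ μ ℝ, Aᵀ * A = Bᵀ * B := by
  open scoped MatrixOrder in
  have hA : 0 ≤ Aᵀ * A := (posSemidef_conjTranspose_mul_self A).nonneg
  refine ⟨CFC.sqrt (Aᵀ * A), ?_⟩
  rw [← conjTranspose_eq_transpose_of_trivial (CFC.sqrt _), (CFC.sqrt_nonneg _).posSemidef.1.eq,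
    CFC.sqrt_mul_sqrt_self _ hA]

section SumSqCone

variable {R : Type*} [CommRing R] [Algebra ℝ R]

def sumSqCone (W : Submodule ℝ R) : PointedCone ℝ R :=
  PointedCone.hull ℝ ((· ^ 2) '' (W : Set R))

theorem mem_sumSqCone_iff {W : Submodule ℝ R} {g : R} :
    g ∈ sumSqCone W ↔ ∃ (r : ℕ) (w : Fin r → R), (∀ j, w j ∈ W) ∧ ∑ j, w j ^ 2 = g := by
  constructor
  · intro hg
    obtain ⟨r, c, s, rfl⟩ := Submodule.mem_span_set'.mp hg
    choose w hw hws using fun j => (s j).2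
    refine ⟨r, fun j => √(c j : ℝ) • w j, fun j => W.smul_mem _ (hw j), ?_⟩
    refine sum_congr rfl fun j _ => ?_
    rw [smul_pow, Real.sq_sqrt (c j).2, ← hws j]
    rfl
  · rintro ⟨r, w, hw, rfl⟩
    exact sum_mem fun j _ => PointedCone.subset_hull ⟨w j, hw j, rfl⟩

theorem sum_sq_sum_smul {κ μ : Type*} [Fintype κ] [Fintype μ] (A : Matrix κ μ ℝ) (u : μ → R) :
    ∑ j, (∑ i, A j i • u i) ^ 2 = ∑ i, ∑ k, (Aᵀ * A) i k • (u i * u k) := by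
  simp_rw [sq, sum_mul_sum, smul_mul_smul_comm, mul_apply, transpose_apply, sum_smul]
  rw [sum_comm]
  exact sum_congr rfl fun i _ => sum_comm

theorem exists_sum_sq_fin_finrank_eq (W : Submodule ℝ R) [FiniteDimensional ℝ W] {r : ℕ}
    (w : Fin r → W) :
    ∃ v : Fin (Module.finrank ℝ W) → W, ∑ j, (v j : R) ^ 2 = ∑ j, (w j : R) ^ 2 := by
  let b := Module.finBasis ℝ W
  let A : Matrix (Fin r) (Fin (Module.finrank ℝ W)) ℝ := fun j i => b.repr (w j) i
  obtain ⟨B, hB⟩ := A.exists_transpose_mul_self_eq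
  have hw : ∀ j, (w j : R) = ∑ i, A j i • (b i : R) := fun j => by
    rw [← congrArg Subtype.val (b.sum_repr (w j)), Submodule.coe_sum]
    simp only [Submodule.coe_smul, A]
  refine ⟨fun j => ∑ i, B j i • b i, ?_⟩
  simp_rw [hw, Submodule.coe_sum, Submodule.coe_smul, sum_sq_sum_smul, hB]

theorem coe_sumSqCone_eq_range (W : Submodule ℝ R) [FiniteDimensional ℝ W] :
    (sumSqCone W : Set R) =
      Set.range fun v : Fin (Module.finrank ℝ W) → W => ∑ j, (v j : R) ^ 2 := by
  ext g
  constructor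
  · intro hg
    obtain ⟨r, w, hw, rfl⟩ := mem_sumSqCone_iff.1 hg
    exact exists_sum_sq_fin_finrank_eq W fun j => ⟨w j, hw j⟩
  · rintro ⟨v, rfl⟩
    exact mem_sumSqCone_iff.2 ⟨_, _, fun j => (v j).2, rfl⟩

end SumSqCone

section SumSqConeOfFunctions

variable {ι : Type*} [Fintype ι]

theorem norm_le_sqrt_norm_sum_sq {κ : Type*} [Fintype κ] (u : κ → ι → ℝ) (j : κ) :
    ‖u j‖ ≤ √‖∑ k, u k ^ 2‖ := by
  refine (pi_norm_le_iff_of_nonneg (Real.sqrt_nonneg _)).2 fun x => Real.abs_le_sqrt ?_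
  calc u j x ^ 2 ≤ ∑ k, u k x ^ 2 := single_le_sum (fun k _ => sq_nonneg (u k x)) (mem_univ j)
    _ ≤ ‖∑ k, u k ^ 2‖ := by
      have := norm_le_pi_norm (∑ k, u k ^ 2) x
      simp only [Real.norm_eq_abs, Finset.sum_apply, Pi.pow_apply] at this
      exact (le_abs_self _).trans this

theorem isProperMap_sum_sq (W : Submodule ℝ (ι → ℝ)) (m : ℕ) :
    IsProperMap fun v : Fin m → W => ∑ j, (v j : ι → ℝ) ^ 2 := by
  refine isProperMap_iff_isCompact_preimage.2 ⟨by fun_prop, fun K hK => ?_⟩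
  obtain ⟨r, hr⟩ := hK.isBounded.subset_closedBall 0
  refine (isCompact_closedBall (0 : Fin m → W) √r).of_isClosed_subset
    (hK.isClosed.preimage (by fun_prop)) fun v hv => ?_
  rw [mem_closedBall_zero_iff, pi_norm_le_iff_of_nonneg (Real.sqrt_nonneg _)]
  exact fun j => (norm_le_sqrt_norm_sum_sq (fun k => (v k : ι → ℝ)) j).trans
    (Real.sqrt_le_sqrt (mem_closedBall_zero_iff.1 (hr hv)))

theorem isClosed_sumSqCone (W : Submodule ℝ (ι → ℝ)) :
    IsClosed (sumSqCone W : Set (ι → ℝ)) := by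
  rw [coe_sumSqCone_eq_range]
  exact (isProperMap_sum_sq W _).isClosedMap.isClosed_range

theorem forall_mem_sumSqCone_dotProduct_nonpos_iff {W : Submodule ℝ (ι → ℝ)} {ψ : ι → ℝ} :
    (∀ g ∈ sumSqCone W, g ⬝ᵥ ψ ≤ 0) ↔ ∀ w ∈ W, (w ^ 2) ⬝ᵥ ψ ≤ 0 := by
  refine ⟨fun h w hw => h _ (mem_sumSqCone_iff.2 ⟨1, fun _ => w, fun _ => hw, by simp⟩), ?_⟩
  rintro h g hg
  obtain ⟨r, w, hw, rfl⟩ := mem_sumSqCone_iff.1 hg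
  rw [sum_dotProduct]
  exact sum_nonpos fun j _ => h _ (hw j)

end SumSqConeOfFunctions

section L1Duality

open Pointwise

variable {ι : Type*} [Fintype ι]

theorem ContinuousLinearMap.apply_eq_dotProduct [DecidableEq ι] (F : (ι → ℝ) →L[ℝ] ℝ)
    (a : ι → ℝ) :
    F a = a ⬝ᵥ fun i => F (Pi.single i 1) := by
  conv_lhs => rw [← univ_sum_single a]
  simp only [map_sum, dotProduct]
  refine sum_congr rfl fun i _ => ?_
  rw [← smul_eq_mul, ← map_smul, ← Pi.single_smul, smul_eq_mul, mul_one]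

theorem exists_dotProduct_lt_lt_of_notMem {s : Set (ι → ℝ)} (hconv : Convex ℝ s)
    (hclosed : IsClosed s) {f : ι → ℝ} (hf : f ∉ s) :
    ∃ (ψ : ι → ℝ) (u : ℝ), (∀ a ∈ s, a ⬝ᵥ ψ < u) ∧ u < f ⬝ᵥ ψ := by
  classical
  obtain ⟨F, u, hs, hf⟩ := geometric_hahn_banach_closed_point hconv hclosed hf
  exact ⟨_, u, fun a ha => F.apply_eq_dotProduct a ▸ hs a ha, F.apply_eq_dotProduct f ▸ hf⟩

theorem convex_setOf_sum_abs_le (ε : ℝ) : Convex ℝ {e : ι → ℝ | ∑ i, |e i| ≤ ε} := by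
  intro e₁ h₁ e₂ h₂ a b ha hb hab
  calc ∑ i, |a * e₁ i + b * e₂ i| ≤ ∑ i, (a * |e₁ i| + b * |e₂ i|) := by
        gcongr with i
        refine (abs_add_le _ _).trans_eq ?_
        rw [abs_mul, abs_mul, abs_of_nonneg ha, abs_of_nonneg hb]
    _ = a * ∑ i, |e₁ i| + b * ∑ i, |e₂ i| := by rw [sum_add_distrib, mul_sum, mul_sum]
    _ ≤ a * ε + b * ε := by gcongr; exacts [h₁, h₂]
    _ = ε := by rw [← add_mul, hab, one_mul]

theorem isCompact_setOf_sum_abs_le (ε : ℝ) : IsCompact {e : ι → ℝ | ∑ i, |e i| ≤ ε} := by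
  refine (isCompact_closedBall 0 ε).of_isClosed_subset
    (isClosed_le (by fun_prop) continuous_const) fun e he => ?_
  have hε : 0 ≤ ε := (sum_nonneg fun i _ => abs_nonneg (e i)).trans he
  rw [mem_closedBall_zero_iff, pi_norm_le_iff_of_nonneg hε]
  exact fun i => (single_le_sum (fun j _ => abs_nonneg (e j)) (mem_univ i)).trans he

theorem dotProduct_le_sum_abs {ψ : ι → ℝ} (hψ : ∀ i, |ψ i| ≤ 1) (e : ι → ℝ) :
    e ⬝ᵥ ψ ≤ ∑ i, |e i| := by
  refine sum_le_sum fun i _ => (le_abs_self _).trans ?_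
  rw [abs_mul]
  exact mul_le_of_le_one_right (abs_nonneg _) (hψ i)

theorem nonpos_of_forall_nonneg_mul_lt {a u : ℝ} (h : ∀ t, 0 ≤ t → t * a < u) : a ≤ 0 := by
  by_contra! ha
  have hu : 0 < u := by simpa using h 0 le_rfl
  simpa [div_mul_cancel₀ u ha.ne'] using h (u / a) (div_nonneg hu.le ha.le)

theorem exists_abs_le_abs_of_ne_zero {ψ : ι → ℝ} (hψ : ψ ≠ 0) :
    ∃ i₀, 0 < |ψ i₀| ∧ ∀ i, |ψ i| ≤ |ψ i₀| := by
  obtain ⟨i₁, hi₁⟩ := Function.ne_iff.1 hψ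
  have : Nonempty ι := ⟨i₁⟩
  obtain ⟨i₀, hi₀⟩ := Finite.exists_max fun i => |ψ i|
  exact ⟨i₀, (abs_pos.2 hi₁).trans_le (hi₀ i₁), hi₀⟩

theorem exists_sum_abs_le_dotProduct_eq {ε : ℝ} (hε : 0 ≤ ε) (ψ : ι → ℝ) (i₀ : ι) :
    ∃ e : ι → ℝ, ∑ i, |e i| ≤ ε ∧ e ⬝ᵥ ψ = ε * |ψ i₀| := by
  classical
  refine ⟨Pi.single i₀ (ε * SignType.sign (ψ i₀)), ?_, ?_⟩
  · simp only [Pi.single_apply, apply_ite, abs_zero, sum_ite_eq', mem_univ, if_true, abs_mul,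
      abs_of_nonneg hε]
    exact mul_le_of_le_one_right hε (by cases SignType.sign (ψ i₀) <;> simp)
  · rw [single_dotProduct, mul_assoc, sign_mul_self]

variable {C : PointedCone ℝ (ι → ℝ)} {ε : ℝ} {f : ι → ℝ}

theorem exists_normalized_witness_of_separation {ψ : ι → ℝ} {u : ℝ} (hε : 0 ≤ ε)
    (hsep : ∀ e, ∑ i, |e i| ≤ ε → ∀ g ∈ C, (e + g) ⬝ᵥ ψ < u) (hu : u < f ⬝ᵥ ψ) :
    ∃ φ : ι → ℝ, ε < f ⬝ᵥ φ ∧ (∀ g ∈ C, g ⬝ᵥ φ ≤ 0) ∧ (∀ i, |φ i| ≤ 1) ∧ ∃ i, |φ i| = 1 := by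
  have hB : ∀ e, ∑ i, |e i| ≤ ε → e ⬝ᵥ ψ < u := fun e he => by
    simpa using hsep e he 0 C.zero_mem
  have hC : ∀ g ∈ C, g ⬝ᵥ ψ ≤ 0 := fun g hg => nonpos_of_forall_nonneg_mul_lt fun t ht => by
    simpa [smul_dotProduct] using hsep 0 (by simpa using hε) _ (C.smul_mem ht hg)
  have hψ : ψ ≠ 0 := by
    rintro rfl
    simpa using (hB 0 (by simpa using hε)).trans hu
  obtain ⟨i₀, hpos, hmax⟩ := exists_abs_le_abs_of_ne_zero hψ
  have hεu : ε * |ψ i₀| < u := by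
    obtain ⟨e, he, heψ⟩ := exists_sum_abs_le_dotProduct_eq hε ψ i₀
    exact heψ ▸ hB e he
  refine ⟨|ψ i₀|⁻¹ • ψ, ?_, fun g hg => ?_, fun i => ?_, i₀, ?_⟩
  · rw [dotProduct_smul, smul_eq_mul, lt_inv_mul_iff₀ hpos, mul_comm]
    exact hεu.trans hu
  · rw [dotProduct_smul, smul_eq_mul]
    exact mul_nonpos_of_nonneg_of_nonpos (inv_nonneg.2 hpos.le) (hC g hg)
  · rw [Pi.smul_apply, smul_eq_mul, abs_mul, abs_inv, abs_abs, inv_mul_le_one₀ hpos]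
    exact hmax i
  · rw [Pi.smul_apply, smul_eq_mul, abs_mul, abs_inv, abs_abs, inv_mul_cancel₀ hpos.ne']

theorem not_exists_sum_abs_sub_le_iff (hC : IsClosed (C : Set (ι → ℝ))) (hε : 0 ≤ ε) :
    (¬ ∃ g ∈ C, ∑ i, |f i - g i| ≤ ε) ↔
      ∃ ψ : ι → ℝ, ε < f ⬝ᵥ ψ ∧ (∀ g ∈ C, g ⬝ᵥ ψ ≤ 0) ∧ (∀ i, |ψ i| ≤ 1) ∧ ∃ i, |ψ i| = 1 := by
  constructor
  · intro hf
    have hfBC : f ∉ {e : ι → ℝ | ∑ i, |e i| ≤ ε} + (C : Set (ι → ℝ)) := by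
      rintro ⟨e, he, g, hg, rfl⟩
      exact hf ⟨g, hg, by simpa using he⟩
    obtain ⟨ψ, u, hsep, hu⟩ := exists_dotProduct_lt_lt_of_notMem
      ((convex_setOf_sum_abs_le ε).add C.convex)
      (hC.add_left_of_isCompact (isCompact_setOf_sum_abs_le ε)) hfBC
    exact exists_normalized_witness_of_separation hε
      (fun e he g hg => hsep _ (Set.add_mem_add he hg)) hu
  · rintro ⟨ψ, hf, hCψ, hψ, -⟩ ⟨g, hg, hfg⟩
    have := dotProduct_le_sum_abs hψ (f - g)
    simp only [sub_dotProduct, Pi.sub_apply] at this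
    linarith [hCψ g hg]

end L1Duality

section Hypercube

noncomputable def cubeEval (n : ℕ) : MvPolynomial (Fin n) ℝ →ₗ[ℝ] (Fin n → Bool) → ℝ where
  toFun p x := eval (bv x) p
  map_add' p q := by ext; simp
  map_smul' c p := by ext; simp

noncomputable def cubePolys (n d : ℕ) : Submodule ℝ ((Fin n → Bool) → ℝ) :=
  (restrictTotalDegree (Fin n) ℝ d).map (cubeEval n)

theorem exists_mem_sumSqCone_cubePolys_iff {n d : ℕ} (P : ((Fin n → Bool) → ℝ) → Prop) :
    (∃ g ∈ sumSqCone (cubePolys n d), P g) ↔ ∃ (r : ℕ) (h : Fin r → MvPolynomial (Fin n) ℝ),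
      (∀ j, (h j).totalDegree ≤ d) ∧ P fun x => ∑ j, eval (bv x) (h j) ^ 2 := by
  have hsum : ∀ {r : ℕ} (h : Fin r → MvPolynomial (Fin n) ℝ),
      ∑ j, cubeEval n (h j) ^ 2 = fun x => ∑ j, eval (bv x) (h j) ^ 2 := fun h => by
    ext x; simp [Finset.sum_apply, cubeEval]
  simp only [mem_sumSqCone_iff, cubePolys, Submodule.mem_map, mem_restrictTotalDegree]
  constructor
  · rintro ⟨_, ⟨r, w, hw, rfl⟩, hP⟩
    choose h hd hh using hw
    refine ⟨r, h, hd, ?_⟩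
    rw [← hsum]
    simpa only [hh] using hP
  · rintro ⟨r, h, hd, hP⟩
    exact ⟨_, ⟨r, fun j => cubeEval n (h j), fun j => ⟨h j, hd j, rfl⟩, rfl⟩, hsum h ▸ hP⟩

theorem forall_mem_cubePolys_iff {n d : ℕ} {P : ((Fin n → Bool) → ℝ) → Prop} :
    (∀ w ∈ cubePolys n d, P w) ↔
      ∀ p : MvPolynomial (Fin n) ℝ, p.totalDegree ≤ d → P fun x => eval (bv x) p := by
  simp only [cubePolys, Submodule.mem_map, mem_restrictTotalDegree, forall_exists_index, and_imp,
    forall_apply_eq_imp_iff₂]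
  rfl

end Hypercube

/-- Strong SDP duality for `ℓ1`-approximate sos degree: `sos-deg_{δ2^n}(f, ℓ1) > d`
if and only if there is a witness function `ψ` with `Σ_x f(x)ψ(x) > δ·2^n`,
`Σ_x p(x)²ψ(x) ≤ 0` for all polynomials `p` of degree at most `d`, and
`max_x |ψ(x)| = 1`. -/
theorem l1_sos_duality (n : ℕ) (f : (Fin n → Bool) → ℝ) (δ : ℝ) (hδ : 0 < δ)
    (d : ℕ) :
    (¬ ∃ (r : ℕ) (h : Fin r → MvPolynomial (Fin n) ℝ),
        (∀ j, (h j).totalDegree ≤ d) ∧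
        ∑ x : Fin n → Bool, |f x - ∑ j, (eval (bv x) (h j)) ^ 2| ≤ δ * 2 ^ n)
    ↔ ∃ ψ : (Fin n → Bool) → ℝ,
        (δ * 2 ^ n < ∑ x : Fin n → Bool, f x * ψ x) ∧
        (∀ p : MvPolynomial (Fin n) ℝ, p.totalDegree ≤ d →
          ∑ x : Fin n → Bool, (eval (bv x) p) ^ 2 * ψ x ≤ 0) ∧
        (∀ x, |ψ x| ≤ 1) ∧ (∃ x, |ψ x| = 1) := by
  rw [← exists_mem_sumSqCone_cubePolys_iff fun g => ∑ x, |f x - g x| ≤ δ * 2 ^ n,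
    not_exists_sum_abs_sub_le_iff (isClosed_sumSqCone _) (by positivity)]
  simp only [forall_mem_sumSqCone_dotProduct_nonpos_iff, forall_mem_cubePolys_iff]
  rfl
end

section
/- Let n be a positive integer and let k be an integer with 0 ≤ k ≤ n/2. For every real r with k < r < k+1, the knapsack system Σ_{i=1}^n x_i − r = 0, x_1² − x_1 = 0, …, x_n² − x_n = 0 has a Positivstellensatz refutation of degree 2k+4: there exist real polynomials g, g_1, …, g_n in variables x_1,…,x_n and real polynomials h_1,…,h_m such that g(x)·(Σ_{i=1}^n x_i − r) + Σ_{i=1}^n g_i(x)·(x_i² − x_i) = 1 + Σ_{j=1}^m h_j(x)² as an identity in ℝ[x_1,…,x_n], where deg(g·(Σ_i x_i − r)) ≤ 2k+4, deg(g_i·(x_i² − x_i)) ≤ 2k+4 for each i, and deg(Σ_j h_j²) ≤ 2k+4. -/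
/-!
Let `s = ∑ i, xᵢ` and `P t = t (t - 1) ⋯ (t - k - 1)`. Since `k < r < k + 1`, exactly one
factor of `P r` is negative, so `a = -1 / P r > 0` and `1 + a P` vanishes at `r`:
`1 + a P(s) = g · (s - r)`.
Modulo the Boolean axioms `xᵢ² = xᵢ`, with multipliers of degree at most `2k + 4`,
`s · e_m ≡ (m + 1) e_{m+1} + m e_m` for the elementary symmetric polynomials, hence
`P(s) ≡ (k + 2)! e_{k+2}`, and `e_{k+2} ≡ ∑_{|S| = k+2} (∏_{i ∈ S} xᵢ)²`. So
`g · (s - r) ≡ 1 + ∑_S (√(a (k + 2)!) ∏_{i ∈ S} xᵢ)²`, a refutation of degree `2k + 4`.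
-/

open MvPolynomial Finset

namespace Finset

theorem sum_powersetCard_sum_compl_insert {α M : Type*} [Fintype α] [DecidableEq α]
    [AddCommMonoid M] (f : Finset α → M) (m : ℕ) :
    ∑ S ∈ powersetCard m univ, ∑ j ∈ Sᶜ, f (insert j S) =
      (m + 1) • ∑ T ∈ powersetCard (m + 1) univ, f T := by
  have hcard : (m + 1) • ∑ T ∈ powersetCard (m + 1) univ, f T =
      ∑ T ∈ powersetCard (m + 1) univ, ∑ _j ∈ T, f T := by
    rw [smul_sum]
    exact sum_congr rfl fun T hT => by rw [sum_const, mem_powersetCard_univ.1 hT]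
  rw [hcard, sum_sigma', sum_sigma']
  refine sum_nbij' (fun p => ⟨insert p.2 p.1, p.2⟩) (fun q => ⟨q.1.erase q.2, q.2⟩)
    ?_ ?_ ?_ ?_ fun _ _ => rfl
  · rintro ⟨S, j⟩ hp
    simp only [mem_sigma, mem_powersetCard_univ, mem_compl] at hp ⊢
    exact ⟨by rw [card_insert_of_notMem hp.2, hp.1], mem_insert_self _ _⟩
  · rintro ⟨T, j⟩ hq
    simp only [mem_sigma, mem_powersetCard_univ, mem_compl] at hq ⊢
    exact ⟨by rw [card_erase_of_mem hq.2, hq.1, Nat.add_sub_cancel], notMem_erase _ _⟩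
  · rintro ⟨S, j⟩ hp
    simp only [mem_sigma, mem_compl] at hp
    simp [erase_insert hp.2]
  · rintro ⟨T, j⟩ hq
    simp only [mem_sigma] at hq
    simp [insert_erase hq.2]

end Finset

theorem prod_range_sub_natCast_neg {K : Type*} [CommRing K] [LinearOrder K] [IsStrictOrderedRing K]
    {k : ℕ} {r : K} (hr1 : (k : K) < r) (hr2 : r < k + 1) :
    ∏ c ∈ range (k + 2), (r - c) < 0 := by
  rw [prod_range_succ]
  refine mul_neg_of_pos_of_neg (prod_pos fun c hc => ?_) (by push_cast; linarith)
  have : (c : K) ≤ k := by exact_mod_cast Nat.lt_succ_iff.1 (mem_range.1 hc)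
  linarith

theorem exists_mul_sub_algebraMap_eq_one_add_smul_prod {K A : Type*} [CommRing K] [CommRing A]
    [Algebra K A] (x : A) {a r : K} {m : ℕ} (har : a * ∏ c ∈ range m, (r - c) = -1) :
    ∃ g : A, g * (x - algebraMap K A r) = 1 + a • ∏ c ∈ range m, (x - c) := by
  obtain ⟨h, hh⟩ := Polynomial.sub_dvd_eval_sub x (algebraMap K A r)
    (∏ c ∈ range m, (Polynomial.X - (c : Polynomial A)))
  simp only [Polynomial.eval_prod, Polynomial.eval_sub, Polynomial.eval_X,
    Polynomial.eval_natCast] at hh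
  have hr : ∏ c ∈ range m, (algebraMap K A r - c) = algebraMap K A (∏ c ∈ range m, (r - c)) := by
    simp
  refine ⟨a • h, ?_⟩
  rw [smul_mul_assoc, mul_comm, ← hh, hr, smul_sub, Algebra.smul_def a (algebraMap K A _),
    ← map_mul, har, map_neg, map_one]
  abel

namespace MvPolynomial

variable {σ R : Type*} [CommRing R]

theorem totalDegree_X_le_one (i : σ) : (X i : MvPolynomial σ R).totalDegree ≤ 1 :=
  (totalDegree_monomial_le _ _).trans (by simp)

theorem totalDegree_prod_X_le (S : Finset σ) :
    (∏ i ∈ S, (X i : MvPolynomial σ R)).totalDegree ≤ S.card :=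
  (totalDegree_finsetProd _ _).trans <| by
    simpa using Finset.sum_le_card_nsmul S _ 1 fun i _ => totalDegree_X_le_one (R := R) i

theorem totalDegree_X_sq_sub_X_le (i : σ) :
    (X i ^ 2 - X i : MvPolynomial σ R).totalDegree ≤ 2 :=
  (totalDegree_sub _ _).trans <| max_le
    ((totalDegree_pow _ _).trans (by linarith [totalDegree_X_le_one (R := R) i]))
    ((totalDegree_X_le_one i).trans (by norm_num))

theorem totalDegree_C_mul_prod_X_sq_le (c : R) (S : Finset σ) :
    ((C c * ∏ i ∈ S, X i) ^ 2).totalDegree ≤ 2 * S.card := by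
  have hdeg : (C c * ∏ i ∈ S, X i).totalDegree ≤ S.card :=
    (totalDegree_mul _ _).trans (by simpa using totalDegree_prod_X_le (R := R) S)
  exact (totalDegree_pow _ _).trans (by omega)

variable [Fintype σ]

theorem totalDegree_sum_X_sub_natCast_le (c : ℕ) :
    (∑ i, X i - (c : MvPolynomial σ R)).totalDegree ≤ 1 := by
  rw [← map_natCast C]
  exact (totalDegree_sub_C_le _ _).trans
    (totalDegree_finsetSum_le fun i _ => totalDegree_X_le_one i)

theorem totalDegree_prod_sum_X_sub_natCast_le (m : ℕ) :
    (∏ c ∈ range m, (∑ i, X i - (c : MvPolynomial σ R))).totalDegree ≤ m :=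
  (totalDegree_finsetProd _ _).trans <| by
    simpa using Finset.sum_le_card_nsmul (range m) _ 1 fun c _ =>
      totalDegree_sum_X_sub_natCast_le (σ := σ) (R := R) c

variable (σ R) in
/-- Polynomials `∑ i, g i * (X i ^ 2 - X i)` in which every summand has total degree at most `d`:
the part of the Boolean ideal reachable in a degree-`d` Positivstellensatz derivation. -/
def boolIdealDegLE (d : ℕ) : Submodule R (MvPolynomial σ R) where
  carrier := {f | ∃ g : σ → MvPolynomial σ R, f = ∑ i, g i * (X i ^ 2 - X i) ∧
    ∀ i, (g i * (X i ^ 2 - X i)).totalDegree ≤ d}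
  zero_mem' := ⟨0, by simp, by simp⟩
  add_mem' := by
    rintro _ _ ⟨g, rfl, hg⟩ ⟨g', rfl, hg'⟩
    refine ⟨g + g', by simp [add_mul, sum_add_distrib], fun i => ?_⟩
    rw [Pi.add_apply, add_mul]
    exact (totalDegree_add _ _).trans (max_le (hg i) (hg' i))
  smul_mem' := by
    rintro c _ ⟨g, rfl, hg⟩
    refine ⟨c • g, by simp [smul_sum], fun i => ?_⟩
    rw [Pi.smul_apply, smul_mul_assoc]
    exact (totalDegree_smul_le _ _).trans (hg i)

theorem boolIdealDegLE_mono : Monotone (boolIdealDegLE σ R) := by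
  rintro d d' hd _ ⟨g, rfl, hg⟩
  exact ⟨g, rfl, fun i => (hg i).trans hd⟩

theorem X_sq_sub_X_mem_boolIdealDegLE (j : σ) :
    X j ^ 2 - X j ∈ boolIdealDegLE σ R 2 := by
  classical
  refine ⟨Pi.single j 1, by simp [Pi.single_apply], fun i => ?_⟩
  rcases eq_or_ne i j with rfl | hij
  · simpa using totalDegree_X_sq_sub_X_le (R := R) i
  · simp [hij]

theorem mul_mem_boolIdealDegLE {d : ℕ} (p : MvPolynomial σ R) {f : MvPolynomial σ R}
    (hf : f ∈ boolIdealDegLE σ R d) : p * f ∈ boolIdealDegLE σ R (p.totalDegree + d) := by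
  obtain ⟨g, rfl, hg⟩ := hf
  refine ⟨p • g, by simp [mul_sum, mul_assoc], fun i => ?_⟩
  rw [Pi.smul_apply, smul_eq_mul, mul_assoc]
  exact (totalDegree_mul _ _).trans (add_le_add_right (hg i) _)

theorem mul_X_sq_sub_X_mem_boolIdealDegLE {d : ℕ} {p : MvPolynomial σ R}
    (hp : p.totalDegree + 2 ≤ d) (j : σ) : p * (X j ^ 2 - X j) ∈ boolIdealDegLE σ R d :=
  boolIdealDegLE_mono hp (mul_mem_boolIdealDegLE p (X_sq_sub_X_mem_boolIdealDegLE j))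

theorem exists_certificate_of_mem_boolIdealDegLE {p g : MvPolynomial σ R} {d : ℕ} {ι : Type*}
    (t : Finset ι) (q : ι → MvPolynomial σ R)
    (hmem : 1 + ∑ x ∈ t, q x ^ 2 - g * p ∈ boolIdealDegLE σ R d)
    (hq : ∀ x ∈ t, (q x ^ 2).totalDegree ≤ d) :
    ∃ (gi : σ → MvPolynomial σ R) (m : ℕ) (h : Fin m → MvPolynomial σ R),
      g * p + ∑ i, gi i * (X i ^ 2 - X i) = 1 + ∑ j, h j ^ 2 ∧
      (∀ i, (gi i * (X i ^ 2 - X i)).totalDegree ≤ d) ∧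
      (∑ j, h j ^ 2).totalDegree ≤ d := by
  obtain ⟨gi, hgi, hdeg⟩ := hmem
  have hsum : ∑ j, q (t.equivFin.symm j) ^ 2 = ∑ x ∈ t, q x ^ 2 :=
    (t.equivFin.symm.sum_comp fun x => q x ^ 2).trans (sum_coe_sort t fun x => q x ^ 2)
  refine ⟨gi, t.card, fun j => q (t.equivFin.symm j), ?_, hdeg, ?_⟩
  · rw [hsum, ← hgi]
    ring
  · exact totalDegree_finsetSum_le fun j _ => hq _ (t.equivFin.symm j).2

variable [DecidableEq σ]

theorem sum_X_mul_prod_X_sub_mem (S : Finset σ) :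
    (∑ j, X j) * ∏ i ∈ S, X i - (S.card • ∏ i ∈ S, X i + ∑ j ∈ Sᶜ, ∏ i ∈ insert j S, X i) ∈
      boolIdealDegLE σ R (S.card + 1) := by
  have hS : ∑ j ∈ S, (X j * ∏ i ∈ S, X i - ∏ i ∈ S, X i) =
      ∑ j ∈ S, (∏ i ∈ S.erase j, X i) * (X j ^ 2 - (X j : MvPolynomial σ R)) :=
    sum_congr rfl fun j hj => by rw [← mul_prod_erase S _ hj]; ring
  have hSc : ∑ j ∈ Sᶜ, X j * ∏ i ∈ S, X i = ∑ j ∈ Sᶜ, ∏ i ∈ insert j S, (X i : MvPolynomial σ R) :=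
    sum_congr rfl fun j hj => (prod_insert (mem_compl.1 hj)).symm
  have hdiff : (∑ j, X j) * ∏ i ∈ S, X i -
      (S.card • ∏ i ∈ S, X i + ∑ j ∈ Sᶜ, ∏ i ∈ insert j S, X i) =
      ∑ j ∈ S, (∏ i ∈ S.erase j, X i) * (X j ^ 2 - (X j : MvPolynomial σ R)) := by
    rw [sum_mul, ← sum_add_sum_compl S, hSc, ← hS, sum_sub_distrib, sum_const]
    abel
  rw [hdiff]
  refine Submodule.sum_mem _ fun j hj => mul_X_sq_sub_X_mem_boolIdealDegLE ?_ j
  have := totalDegree_prod_X_le (R := R) (S.erase j)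
  have := card_erase_add_one hj
  omega

theorem sum_X_mul_esymm_sub_mem (m : ℕ) :
    (∑ j, X j) * esymm σ R m - ((m + 1) • esymm σ R (m + 1) + m • esymm σ R m) ∈
      boolIdealDegLE σ R (m + 1) := by
  have hsplit : (m + 1) • esymm σ R (m + 1) + m • esymm σ R m =
      ∑ S ∈ powersetCard m univ,
        (S.card • ∏ i ∈ S, X i + ∑ j ∈ Sᶜ, ∏ i ∈ insert j S, (X i : MvPolynomial σ R)) := by
    rw [sum_add_distrib, sum_powersetCard_sum_compl_insert (fun T => ∏ i ∈ T, X i), add_comm,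
      esymm, esymm, smul_sum]
    congr 1
    exact sum_congr rfl fun S hS => by rw [mem_powersetCard_univ.1 hS]
  rw [hsplit, esymm, mul_sum, ← sum_sub_distrib]
  exact Submodule.sum_mem _ fun S hS => by
    simpa [mem_powersetCard_univ.1 hS] using sum_X_mul_prod_X_sub_mem (R := R) S

theorem prod_sum_X_sub_natCast_sub_esymm_mem (m : ℕ) :
    ∏ c ∈ range m, (∑ i, X i - (c : MvPolynomial σ R)) - m.factorial • esymm σ R m ∈
      boolIdealDegLE σ R m := by
  induction m with
  | zero => simp [esymm_zero]
  | succ m ih =>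
    set s : MvPolynomial σ R := ∑ i, X i
    have hrec : ∏ c ∈ range (m + 1), (s - c) - (m + 1).factorial • esymm σ R (m + 1) =
        (s - m) * (∏ c ∈ range m, (s - c) - m.factorial • esymm σ R m) +
          m.factorial • (s * esymm σ R m - ((m + 1) • esymm σ R (m + 1) + m • esymm σ R m)) := by
      simp only [prod_range_succ, Nat.factorial_succ, nsmul_eq_mul]
      push_cast
      ring
    rw [hrec]
    refine add_mem (boolIdealDegLE_mono ?_ (mul_mem_boolIdealDegLE _ ih))
      (Submodule.smul_of_tower_mem _ _ (sum_X_mul_esymm_sub_mem m))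
    linarith [totalDegree_sum_X_sub_natCast_le (σ := σ) (R := R) m]

theorem prod_X_sq_sub_prod_X_mem (S : Finset σ) :
    (∏ i ∈ S, X i) ^ 2 - ∏ i ∈ S, X i ∈ boolIdealDegLE σ R (2 * S.card) := by
  induction S using Finset.induction_on with
  | empty => simp
  | @insert j S hj ih =>
    have hrec : (∏ i ∈ insert j S, X i) ^ 2 - ∏ i ∈ insert j S, (X i : MvPolynomial σ R) =
        X j ^ 2 * ((∏ i ∈ S, X i) ^ 2 - ∏ i ∈ S, X i) + (∏ i ∈ S, X i) * (X j ^ 2 - X j) := by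
      rw [prod_insert hj]
      ring
    have hXj : (X j ^ 2 : MvPolynomial σ R).totalDegree ≤ 2 :=
      (totalDegree_pow _ _).trans (by linarith [totalDegree_X_le_one (R := R) j])
    rw [hrec, card_insert_of_notMem hj]
    refine add_mem (boolIdealDegLE_mono ?_ (mul_mem_boolIdealDegLE _ ih))
      (mul_X_sq_sub_X_mem_boolIdealDegLE ?_ j)
    · linarith
    · linarith [totalDegree_prod_X_le (R := R) S]

theorem sum_sq_prod_X_sub_esymm_mem (m : ℕ) :
    ∑ S ∈ powersetCard m univ, (∏ i ∈ S, X i) ^ 2 - esymm σ R m ∈ boolIdealDegLE σ R (2 * m) := by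
  rw [esymm, ← sum_sub_distrib]
  exact Submodule.sum_mem _ fun S hS => by
    simpa [mem_powersetCard_univ.1 hS] using prod_X_sq_sub_prod_X_mem (R := R) S

theorem sum_sq_sub_smul_prod_sum_X_sub_natCast_mem {a : ℝ} (ha : 0 ≤ a) (m : ℕ) :
    ∑ S ∈ powersetCard m univ, (C √(a * m.factorial) * ∏ i ∈ S, X i) ^ 2 -
      a • ∏ c ∈ range m, (∑ i, X i - (c : MvPolynomial σ ℝ)) ∈ boolIdealDegLE σ ℝ (2 * m) := by
  have hsq : ∑ S ∈ powersetCard m univ, (C √(a * m.factorial) * ∏ i ∈ S, X i) ^ 2 =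
      (a * m.factorial) • ∑ S ∈ powersetCard m univ, (∏ i ∈ S, (X i : MvPolynomial σ ℝ)) ^ 2 := by
    simp only [mul_pow, ← map_pow, Real.sq_sqrt (by positivity : 0 ≤ a * m.factorial), mul_sum,
      smul_eq_C_mul]
  have hdiff : ∑ S ∈ powersetCard m univ, (C √(a * m.factorial) * ∏ i ∈ S, X i) ^ 2 -
      a • ∏ c ∈ range m, (∑ i, X i - (c : MvPolynomial σ ℝ)) =
        (a * m.factorial) • (∑ S ∈ powersetCard m univ, (∏ i ∈ S, X i) ^ 2 - esymm σ ℝ m) -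
          a • (∏ c ∈ range m, (∑ i, X i - (c : MvPolynomial σ ℝ)) - m.factorial • esymm σ ℝ m) := by
    simp only [hsq, smul_sub, mul_smul, Nat.cast_smul_eq_nsmul]
    abel
  rw [hdiff]
  exact sub_mem (Submodule.smul_mem _ _ (sum_sq_prod_X_sub_esymm_mem m))
    (Submodule.smul_mem _ _
      (boolIdealDegLE_mono (by omega) (prod_sum_X_sub_natCast_sub_esymm_mem m)))

end MvPolynomial

theorem knapsack_refutation_upper_bound_general (n k : ℕ)
    (r : ℝ) (hr1 : (k : ℝ) < r) (hr2 : r < (k : ℝ) + 1) :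
    ∃ (g : MvPolynomial (Fin n) ℝ) (gi : Fin n → MvPolynomial (Fin n) ℝ)
      (m : ℕ) (h : Fin m → MvPolynomial (Fin n) ℝ),
      g * ((∑ i, X i) - C r) + (∑ i, gi i * (X i ^ 2 - X i))
        = 1 + ∑ j, (h j) ^ 2 ∧
      (g * ((∑ i, X i) - C r)).totalDegree ≤ 2 * k + 4 ∧
      (∀ i, (gi i * (X i ^ 2 - X i)).totalDegree ≤ 2 * k + 4) ∧
      (∑ j, (h j) ^ 2).totalDegree ≤ 2 * k + 4 := by
  set ρ : ℝ := ∏ c ∈ range (k + 2), (r - c)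
  have hρ : ρ < 0 := prod_range_sub_natCast_neg hr1 hr2
  obtain ⟨g, hg⟩ := exists_mul_sub_algebraMap_eq_one_add_smul_prod
    (∑ i, X i : MvPolynomial (Fin n) ℝ) (show -ρ⁻¹ * ρ = -1 by rw [neg_mul, inv_mul_cancel₀ hρ.ne])
  rw [algebraMap_eq] at hg
  set sq : Finset (Fin n) → MvPolynomial (Fin n) ℝ :=
    fun S => C √(-ρ⁻¹ * (k + 2).factorial) * ∏ i ∈ S, X i
  have hmem : 1 + ∑ S ∈ powersetCard (k + 2) univ, sq S ^ 2 - g * (∑ i, X i - C r) ∈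
      boolIdealDegLE (Fin n) ℝ (2 * k + 4) := by
    rw [hg, add_sub_add_left_eq_sub]
    exact boolIdealDegLE_mono (by omega)
      (sum_sq_sub_smul_prod_sum_X_sub_natCast_mem (by simpa using hρ.le) _)
  obtain ⟨gi, m, h, heq, hgi, hh⟩ := exists_certificate_of_mem_boolIdealDegLE _ sq hmem
    fun S hS => (totalDegree_C_mul_prod_X_sq_le _ S).trans
      (by rw [mem_powersetCard_univ.1 hS]; omega)
  refine ⟨g, gi, m, h, heq, ?_, hgi, hh⟩
  rw [hg]
  refine (totalDegree_add _ _).trans (max_le (by simp) ((totalDegree_smul_le _ _).trans ?_))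
  exact (totalDegree_prod_sum_X_sub_natCast_le _).trans (by omega)

/-- For `0 ≤ k ≤ n/2` and `k < r < k+1`, the knapsack system has a
Positivstellensatz refutation of degree `2k+4`. -/
theorem knapsack_refutation_upper_bound (n k : ℕ) (hn : 0 < n) (hk : 2 * k ≤ n)
    (r : ℝ) (hr1 : (k : ℝ) < r) (hr2 : r < (k : ℝ) + 1) :
    ∃ (g : MvPolynomial (Fin n) ℝ) (gi : Fin n → MvPolynomial (Fin n) ℝ)
      (m : ℕ) (h : Fin m → MvPolynomial (Fin n) ℝ),
      g * ((∑ i, X i) - C r) + (∑ i, gi i * (X i ^ 2 - X i))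
        = 1 + ∑ j, (h j) ^ 2 ∧
      (g * ((∑ i, X i) - C r)).totalDegree ≤ 2 * k + 4 ∧
      (∀ i, (gi i * (X i ^ 2 - X i)).totalDegree ≤ 2 * k + 4) ∧
      (∑ j, (h j) ^ 2).totalDegree ≤ 2 * k + 4 :=
  knapsack_refutation_upper_bound_general n k r hr1 hr2
end

section
/- Let n and k be positive integers with k ≤ n, and let A_k ∈ ℝ[x_1,…,x_n] be the polynomial A_k(x) = |x|·(|x|−1)···(|x|−k+1), where |x| = x_1+⋯+x_n. Then there exist polynomials g_1,…,g_n ∈ ℝ[x_1,…,x_n], each of degree at most 2k−2, such that A_k(x) = Σ_{i=1}^n (x_i² − x_i)·g_i(x) + k!·e_k(x_1², x_2², …, x_n²) as an identity of polynomials, where e_k is the k-th elementary symmetric polynomial. In particular, A_k is a sum of squares modulo the ideal ⟨x_1²−x_1, …, x_n²−x_n⟩, since k!·e_k(x_1²,…,x_n²) = k!·Σ_{|S|=k} (Π_{i∈S} x_i)². -/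
/-!
Write `x_S² = ∏_{i ∈ S} x_i²`, `E_k = ∑_{|S| = k} x_S²` and `s = x_1 + ⋯ + x_n`. Modulo
`⟨x_i² - x_i⟩`, multiplying `x_S²` by `x_i` changes nothing when `i ∈ S` and gives `x_{S ∪ {i}}²`
otherwise; as every `(k+1)`-set arises from exactly `k + 1` pairs `(S, i)`, this yields
`E_k · (s - k) ≡ (k + 1) E_{k+1}` with multipliers of degree `2k`. Starting from `s ≡ E_1`,
induction on `k` gives `A_k ≡ k! E_k`.
-/

open MvPolynomial Finset

open scoped Nat

theorem Finset.sum_powersetCard_sum_compl_insert_s9 {α M : Type*} [Fintype α] [DecidableEq α]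
    [AddCommMonoid M] (k : ℕ) (f : Finset α → M) :
    ∑ S ∈ powersetCard k univ, ∑ i ∈ Sᶜ, f (insert i S)
      = (k + 1) • ∑ T ∈ powersetCard (k + 1) univ, f T := by
  have count : ∑ T ∈ powersetCard (k + 1) (univ : Finset α), ∑ _i ∈ T, f T
      = (k + 1) • ∑ T ∈ powersetCard (k + 1) univ, f T := by
    rw [smul_sum]
    refine sum_congr rfl fun T hT => ?_
    rw [sum_const, mem_powersetCard_univ.mp hT]
  rw [← count, sum_sigma', sum_sigma']
  refine sum_nbij' (fun p => ⟨insert p.2 p.1, p.2⟩) (fun p => ⟨p.1.erase p.2, p.2⟩)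
    ?_ ?_ ?_ ?_ fun _ _ => rfl
  · rintro ⟨S, i⟩ hp
    simp only [mem_sigma, mem_powersetCard_univ, mem_compl] at hp ⊢
    exact ⟨by rw [card_insert_of_notMem hp.2, hp.1], mem_insert_self _ _⟩
  · rintro ⟨T, i⟩ hp
    simp only [mem_sigma, mem_powersetCard_univ, mem_compl] at hp ⊢
    exact ⟨by rw [card_erase_of_mem hp.2, hp.1, Nat.add_sub_cancel], notMem_erase _ _⟩
  · rintro ⟨S, i⟩ hp
    simp only [mem_sigma, mem_compl] at hp
    simp [erase_insert hp.2]
  · rintro ⟨T, i⟩ hp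
    simp only [mem_sigma] at hp
    simp [insert_erase hp.2]

namespace MvPolynomial

variable {σ R : Type*} [CommRing R]

theorem totalDegree_X_pow_le (i : σ) (m : ℕ) : (X i ^ m : MvPolynomial σ R).totalDegree ≤ m := by
  rw [X_pow_eq_monomial]
  exact (totalDegree_monomial_le _ _).trans_eq (by simp)

theorem totalDegree_prod_X_sq_le (S : Finset σ) :
    (∏ i ∈ S, X i ^ 2 : MvPolynomial σ R).totalDegree ≤ 2 * #S :=
  (totalDegree_finsetProd _ _).trans <| by
    simpa [mul_comm] using sum_le_sum fun i (_ : i ∈ S) => totalDegree_X_pow_le (R := R) i 2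

variable [Fintype σ]

theorem totalDegree_sum_X_sub_C_le (c : R) :
    (∑ i, X i - C c : MvPolynomial σ R).totalDegree ≤ 1 :=
  (totalDegree_sub_C_le _ _).trans <|
    totalDegree_finsetSum_le fun i _ => by simpa using totalDegree_X_pow_le (R := R) i 1

variable (σ R) in
noncomputable def esymmSq (k : ℕ) : MvPolynomial σ R :=
  ∑ S ∈ powersetCard k univ, ∏ i ∈ S, X i ^ 2

def BooleanCongr (d : ℕ) (p q : MvPolynomial σ R) : Prop :=
  ∃ g : σ → MvPolynomial σ R, (∀ i, (g i).totalDegree ≤ d) ∧ p = ∑ i, (X i ^ 2 - X i) * g i + q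

namespace BooleanCongr

variable {d d' : ℕ} {p q r p' q' : MvPolynomial σ R}

theorem refl (d : ℕ) (p : MvPolynomial σ R) : BooleanCongr d p p :=
  ⟨0, by simp, by simp⟩

theorem mono (h : BooleanCongr d p q) (hd : d ≤ d') : BooleanCongr d' p q :=
  let ⟨g, hg, hpq⟩ := h
  ⟨g, fun i => (hg i).trans hd, hpq⟩

theorem symm (h : BooleanCongr d p q) : BooleanCongr d q p :=
  let ⟨g, hg, hpq⟩ := h
  ⟨-g, by simpa using hg, by simp [hpq, mul_neg, sum_neg_distrib]⟩

theorem add (h : BooleanCongr d p q) (h' : BooleanCongr d p' q') :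
    BooleanCongr d (p + p') (q + q') :=
  let ⟨g, hg, hpq⟩ := h
  let ⟨g', hg', hpq'⟩ := h'
  ⟨g + g', fun i => (totalDegree_add _ _).trans (max_le (hg i) (hg' i)), by
    simp only [hpq, hpq', Pi.add_apply, mul_add, sum_add_distrib]; ring⟩

theorem trans (h : BooleanCongr d p q) (h' : BooleanCongr d q r) : BooleanCongr d p r := by
  simpa using h.add (h'.add (refl d (-q)))

theorem sum {ι : Type*} (s : Finset ι) {p q : ι → MvPolynomial σ R}
    (h : ∀ a ∈ s, BooleanCongr d (p a) (q a)) :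
    BooleanCongr d (∑ a ∈ s, p a) (∑ a ∈ s, q a) := by
  induction s using Finset.cons_induction with
  | empty => exact refl d 0
  | cons a s _ ih =>
    rw [sum_cons, sum_cons]
    exact (h a (mem_cons_self a s)).add (ih fun b hb => h b (mem_cons_of_mem hb))

theorem mul_right (h : BooleanCongr d p q) (r : MvPolynomial σ R) :
    BooleanCongr (d + r.totalDegree) (p * r) (q * r) :=
  let ⟨g, hg, hpq⟩ := h
  ⟨fun i => g i * r, fun i => (totalDegree_mul _ _).trans (Nat.add_le_add_right (hg i) _), by
    simp only [hpq, add_mul, sum_mul, mul_assoc]⟩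

theorem C_mul (h : BooleanCongr d p q) (c : R) : BooleanCongr d (C c * p) (C c * q) := by
  simpa [mul_comm] using h.mul_right (C c)

theorem X_sq_mul (i : σ) (m : MvPolynomial σ R) :
    BooleanCongr m.totalDegree (X i ^ 2 * m) (X i * m) := by
  classical
  refine ⟨fun j => if j = i then m else 0, fun j => ?_, ?_⟩
  · dsimp only
    split_ifs <;> simp
  · simp only [mul_ite, mul_zero, sum_ite_eq', mem_univ, if_true]
    ring

end BooleanCongr

theorem esymmSq_one : esymmSq σ R 1 = ∑ i, X i ^ 2 := by
  simp [esymmSq, powersetCard_one]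

theorem esymmSq_mul_sum_X_sub_C_booleanCongr (k : ℕ) :
    BooleanCongr (2 * k) (esymmSq σ R k * (∑ i, X i - C (k : R)))
      ((k + 1) • esymmSq σ R (k + 1)) := by
  classical
  have per_set : ∀ S ∈ powersetCard k (univ : Finset σ),
      BooleanCongr (2 * k) ((∏ j ∈ S, X j ^ 2) * ∑ i, X i)
        (∑ _i ∈ S, ∏ j ∈ S, X j ^ 2 + ∑ i ∈ Sᶜ, ∏ j ∈ insert i S, (X j : MvPolynomial σ R) ^ 2) := by
    intro S hS
    have hcard := mem_powersetCard_univ.mp hS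
    rw [mul_sum, ← sum_add_sum_compl S]
    refine .add (.sum _ fun i hi => ?_) (.sum _ fun i hi => ?_)
    · have hk : 1 ≤ k := hcard ▸ card_pos.mpr ⟨i, hi⟩
      have hdeg : (X i * ∏ j ∈ S.erase i, (X j : MvPolynomial σ R) ^ 2).totalDegree ≤ 2 * k :=
        calc _ ≤ 1 + 2 * #(S.erase i) := (totalDegree_mul _ _).trans <|
                add_le_add (by simpa using totalDegree_X_pow_le (R := R) i 1)
                  (totalDegree_prod_X_sq_le _)
          _ ≤ 2 * k := by rw [card_erase_of_mem hi, hcard]; omega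
      convert (BooleanCongr.X_sq_mul i _).mono hdeg using 1 <;>
        rw [← mul_prod_erase S _ hi] <;> ring
    · rw [mem_compl] at hi
      have hdeg := (totalDegree_prod_X_sq_le (R := R) S).trans_eq (by rw [hcard])
      rw [prod_insert hi, mul_comm _ (X i)]
      exact ((BooleanCongr.X_sq_mul i _).mono hdeg).symm
  have same_set : ∑ S ∈ powersetCard k univ, ∑ _i ∈ S, ∏ j ∈ S, (X j : MvPolynomial σ R) ^ 2
      = k • esymmSq σ R k := by
    rw [esymmSq, smul_sum]
    exact sum_congr rfl fun S hS => by rw [sum_const, mem_powersetCard_univ.mp hS]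
  have hsum := BooleanCongr.sum _ per_set
  rw [sum_add_distrib, same_set, ← sum_mul,
    sum_powersetCard_sum_compl_insert_s9 k fun T => ∏ j ∈ T, (X j : MvPolynomial σ R) ^ 2] at hsum
  convert hsum.add (.refl _ (-(k • esymmSq σ R k))) using 1
  · rw [esymmSq, nsmul_eq_mul, ← map_natCast (C : R →+* MvPolynomial σ R)]; ring
  · rw [esymmSq]; abel

theorem prod_range_sum_X_sub_C_booleanCongr {k : ℕ} (hk : 1 ≤ k) :
    BooleanCongr (2 * k - 2) (∏ j ∈ range k, (∑ i, X i - C (j : R)))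
      (C (k ! : R) * esymmSq σ R k) := by
  induction k, hk using Nat.le_induction with
  | base =>
    have := BooleanCongr.sum (univ : Finset σ) fun i _ => (BooleanCongr.X_sq_mul (R := R) i 1).symm
    simpa [esymmSq_one] using this
  | succ k hk ih =>
    have hdeg : 2 * k - 2 + (∑ i, X i - C (k : R) : MvPolynomial σ R).totalDegree ≤ 2 * k := by
      have := totalDegree_sum_X_sub_C_le (σ := σ) (k : R)
      omega
    have reduce := (ih.mul_right (∑ i, X i - C (k : R))).mono hdeg
    rw [mul_assoc] at reduce
    have step := reduce.trans ((esymmSq_mul_sum_X_sub_C_booleanCongr k).C_mul (k ! : R))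
    rw [prod_range_succ, Nat.factorial_succ, Nat.cast_mul, map_mul, show 2 * (k + 1) - 2 = 2 * k by omega]
    convert step using 1
    rw [map_natCast, nsmul_eq_mul]
    ring

end MvPolynomial

theorem Ak_eq_sos_mod_ideal_general (n k : ℕ) (hk1 : 1 ≤ k) :
    ∃ g : Fin n → MvPolynomial (Fin n) ℝ,
      (∀ i, (g i).totalDegree ≤ 2 * k - 2) ∧
      (∏ j ∈ Finset.range k, ((∑ i, X i) - C (j : ℝ)))
        = (∑ i, (X i ^ 2 - X i) * g i)
          + C (k.factorial : ℝ) *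
              ∑ S ∈ Finset.powersetCard k (Finset.univ : Finset (Fin n)),
                ∏ i ∈ S, (X i) ^ 2 :=
  prod_range_sum_X_sub_C_booleanCongr hk1

/-- `A_k(x) = |x|(|x|-1)⋯(|x|-k+1)` equals `k!·e_k(x_1²,…,x_n²)` modulo the ideal
`⟨x_i² - x_i⟩`, with multipliers of degree at most `2k-2`. -/
theorem Ak_eq_sos_mod_ideal (n k : ℕ) (hk1 : 1 ≤ k) (hk2 : k ≤ n) :
    ∃ g : Fin n → MvPolynomial (Fin n) ℝ,
      (∀ i, (g i).totalDegree ≤ 2 * k - 2) ∧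
      (∏ j ∈ Finset.range k, ((∑ i, X i) - C (j : ℝ)))
        = (∑ i, (X i ^ 2 - X i) * g i)
          + C (k.factorial : ℝ) *
              ∑ S ∈ Finset.powersetCard k (Finset.univ : Finset (Fin n)),
                ∏ i ∈ S, (X i) ^ 2 :=
  Ak_eq_sos_mod_ideal_general n k hk1
end

section
/- Let n and t be integers with 1 ≤ t ≤ (n+1)/2, and let J(n,t) be the Johnson graph whose vertices are the t-element subsets of {1,…,n}, with S and T adjacent if and only if |S ∩ T| = t−1. Let A be the adjacency matrix of J(n,t) over ℝ. Then for every integer i with 0 ≤ i ≤ t, the number t(n−t) − i(n+1−i) is an eigenvalue of A whose eigenspace {v : A v = (t(n−t) − i(n+1−i))·v} has dimension exactly C(n,i) − C(n,i−1) (with the convention C(n,−1) = 0). Since these multiplicities sum to C(n,t), these are all the eigenvalues of A. -/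
/-!
Let `W j` be the inclusion matrix of `j`-subsets into `(j+1)`-subsets of an `n`-set, and let
`D j = W (j-1) * (W (j-1))ᵀ` (with `D 0 = 0`). Counting common supersets and common subsets gives
`(W j)ᵀ * W j = D j + (n - 2j) • 1` and `A m = D m - m • 1` for the Johnson adjacency matrix
`A m` (`m ≥ 1`). The first identity makes `(W j)ᵀ * W j` positive definite for `2j < n`, so
`W j` is injective, and it shows that `W j` maps the `μ`-eigenspace of `D j` into the
`(μ + n - 2j)`-eigenspace of `D (j+1)`. Pushing `ker D i`, of dimension `C(n,i) - C(n,i-1)`, up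
to level `t` gives an eigenspace of `A t` for `t(n-t) - i(n+1-i)` of at least that dimension.
These lower bounds add up to `C(n,t)`, the size of the matrix, while eigenspaces for distinct
eigenvalues are independent; hence every bound is an equality.
-/

theorem iSupIndep.sum_finrank_le {ι K V : Type*} [DivisionRing K] [AddCommGroup V] [Module K V]
    [FiniteDimensional K V] {p : ι → Submodule K V} (hp : iSupIndep p) (s : Finset ι) :
    ∑ i ∈ s, Module.finrank K (p i) ≤ Module.finrank K V := by
  classical
  rw [← Finset.sum_coe_sort, ← Module.finrank_directSum]
  exact LinearMap.finrank_le_finrank_of_injective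
    (hp.comp Subtype.val_injective).dfinsupp_lsum_injective

theorem Nat.choose_eq_ite_of_le {k j : ℕ} (h : k ≤ j) :
    k.choose j = if k = j then 1 else 0 := by
  rcases h.lt_or_eq with h | rfl
  · simp [Nat.choose_eq_zero_of_lt h, h.ne]
  · simp

theorem Nat.choose_le_choose_succ_of_two_mul_lt {n t : ℕ} (h : 2 * t < n) :
    n.choose t ≤ n.choose (t + 1) := by
  refine Nat.le_of_mul_le_mul_right ?_ t.succ_pos
  rw [Nat.choose_succ_right_eq]
  exact Nat.mul_le_mul_left _ (by omega)

theorem Nat.sum_range_choose_sub_choose {n t : ℕ} (h : 2 * t ≤ n + 1) :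
    ∑ i ∈ Finset.range (t + 1), (if i = 0 then 1 else n.choose i - n.choose (i - 1))
      = n.choose t := by
  induction t with
  | zero => simp
  | succ t ih =>
    rw [Finset.sum_range_succ, ih (by omega), if_neg t.succ_ne_zero, Nat.add_sub_cancel]
    have := Nat.choose_le_choose_succ_of_two_mul_lt (n := n) (t := t) (by omega)
    omega

open Finset Matrix Module

namespace Johnson

variable {α : Type*} [Fintype α] [DecidableEq α]

variable (α) in
abbrev Level (j : ℕ) := {S : Finset α // #S = j}

variable (α) in
def inclusionMatrix (j : ℕ) : Matrix (Level α (j + 1)) (Level α j) ℝ :=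
  of fun T S => if S.1 ⊆ T.1 then 1 else 0

local notation "W" => inclusionMatrix α

variable (α) in
def adjMatrix (m : ℕ) : Matrix (Level α m) (Level α m) ℝ :=
  of fun S T => if #(S.1 ∩ T.1) = m - 1 then 1 else 0

variable (α) in
def downUp : (m : ℕ) → Matrix (Level α m) (Level α m) ℝ
  | 0 => 0
  | j + 1 => W j * (W j)ᵀ

omit [DecidableEq α] in
lemma card_level (j : ℕ) : Fintype.card (Level α j) = (Fintype.card α).choose j :=
  Fintype.card_finset_len j

lemma card_level_subset (X : Finset α) (j : ℕ) :
    #{S : Level α j | S.1 ⊆ X} = (#X).choose j := by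
  rw [← card_powersetCard]
  refine card_bij (fun S _ => S.1) (fun S hS => ?_) (fun _ _ _ _ h => Subtype.ext h) ?_
  · exact mem_powersetCard.2 ⟨(mem_filter.1 hS).2, S.2⟩
  · intro P hP
    obtain ⟨hPX, hP⟩ := mem_powersetCard.1 hP
    exact ⟨⟨P, hP⟩, by simpa using hPX, rfl⟩

lemma card_level_superset {X : Finset α} {m : ℕ} (hX : #X ≤ m) :
    #{T : Level α m | X ⊆ T.1} = (Fintype.card α - #X).choose (m - #X) := by
  rw [← card_compl, ← card_powersetCard]
  refine card_bij (fun T _ => T.1 \ X) (fun T hT => ?_) (fun T hT T' hT' h => ?_) ?_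
  · rw [mem_filter] at hT
    rw [mem_powersetCard, card_sdiff_of_subset hT.2, T.2]
    exact ⟨fun x hx => by simpa using (mem_sdiff.1 hx).2, rfl⟩
  · rw [mem_filter] at hT hT'
    rw [Subtype.ext_iff, ← sdiff_union_of_subset hT.2, ← sdiff_union_of_subset hT'.2, h]
  · intro P hP
    obtain ⟨hPX, hP⟩ := mem_powersetCard.1 hP
    have hdisj : Disjoint P X := by simpa using disjoint_compl_right.mono_left hPX
    refine ⟨⟨P ∪ X, by rw [card_union_of_disjoint hdisj, hP]; omega⟩, by simp, ?_⟩
    simp [union_sdiff_right, hdisj.sdiff_eq_left]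

lemma card_level_superset_of_lt {X : Finset α} {m : ℕ} (hX : m < #X) :
    #{T : Level α m | X ⊆ T.1} = 0 := by
  refine card_eq_zero.2 (filter_eq_empty_iff.2 fun T _ hXT => ?_)
  have := card_le_card hXT
  omega

omit [Fintype α] in
lemma card_inter_lt_of_ne {j : ℕ} {S S' : Level α j} (h : S ≠ S') : #(S.1 ∩ S'.1) < j := by
  by_contra! hle
  have hS := eq_of_subset_of_card_le inter_subset_left (by rwa [S.2])
  have hS' := eq_of_subset_of_card_le inter_subset_right (by rwa [S'.2])
  exact h (Subtype.ext (hS.symm.trans hS'))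

lemma inclusionMatrix_mul_transpose_apply (j : ℕ) (T T' : Level α (j + 1)) :
    (W j * (W j)ᵀ) T T' = ((#(T.1 ∩ T'.1)).choose j : ℝ) := by
  simp only [mul_apply, transpose_apply, inclusionMatrix, of_apply, ite_zero_mul_ite_zero,
    mul_one, ← subset_inter_iff, sum_boole, card_level_subset]

lemma transpose_mul_inclusionMatrix_apply (j : ℕ) (S S' : Level α j) :
    ((W j)ᵀ * W j) S S' = #{T : Level α (j + 1) | S.1 ∪ S'.1 ⊆ T.1} := by
  simp only [mul_apply, transpose_apply, inclusionMatrix, of_apply, ite_zero_mul_ite_zero,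
    mul_one, ← union_subset_iff, sum_boole]

lemma transpose_mul_inclusionMatrix_apply_self (j : ℕ) (S : Level α j) :
    ((W j)ᵀ * W j) S S = Fintype.card α - j := by
  have hj : j ≤ Fintype.card α := S.2 ▸ card_le_univ S.1
  rw [transpose_mul_inclusionMatrix_apply, union_self, card_level_superset (by omega), S.2,
    Nat.add_sub_cancel_left, Nat.choose_one_right, Nat.cast_sub hj]

lemma transpose_mul_inclusionMatrix_apply_of_ne {j : ℕ} {S S' : Level α j} (h : S ≠ S') :
    ((W j)ᵀ * W j) S S' = if #(S.1 ∩ S'.1) + 1 = j then 1 else 0 := by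
  have hinter := card_inter_lt_of_ne h
  have hunion := card_union_add_card_inter S.1 S'.1
  rw [S.2, S'.2] at hunion
  rw [transpose_mul_inclusionMatrix_apply]
  rcases (show #(S.1 ∪ S'.1) = j + 1 ∨ j + 1 < #(S.1 ∪ S'.1) by omega) with hu | hu
  · rw [card_level_superset hu.le, hu, if_pos (by omega)]
    simp
  · rw [card_level_superset_of_lt hu, if_neg (by omega)]
    simp

lemma transpose_mul_inclusionMatrix (j : ℕ) :
    (W j)ᵀ * W j = downUp α j + ((Fintype.card α : ℝ) - 2 * j) • 1 := by
  ext S S'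
  rw [Matrix.add_apply, Matrix.smul_apply]
  rcases eq_or_ne S S' with rfl | h
  · rw [transpose_mul_inclusionMatrix_apply_self, one_apply_eq]
    cases j with
    | zero => simp [downUp]
    | succ j =>
      rw [downUp, inclusionMatrix_mul_transpose_apply, inter_self, S.2,
        Nat.choose_succ_self_right]
      push_cast
      ring
  · rw [transpose_mul_inclusionMatrix_apply_of_ne h, one_apply_ne h, smul_zero, add_zero]
    cases j with
    | zero => exact absurd (Subtype.ext (by rw [card_eq_zero.1 S.2, card_eq_zero.1 S'.2])) h
    | succ j =>
      rw [downUp, inclusionMatrix_mul_transpose_apply,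
        Nat.choose_eq_ite_of_le (Nat.lt_succ_iff.1 (card_inter_lt_of_ne h))]
      simp

lemma adjMatrix_eq {m : ℕ} (hm : m ≠ 0) : adjMatrix α m = downUp α m - (m : ℝ) • 1 := by
  obtain ⟨j, rfl⟩ := Nat.exists_eq_add_one_of_ne_zero hm
  ext T T'
  rw [downUp, Matrix.sub_apply, inclusionMatrix_mul_transpose_apply, Matrix.smul_apply,
    adjMatrix, of_apply, Nat.add_sub_cancel]
  rcases eq_or_ne T T' with rfl | h
  · rw [inter_self, T.2, Nat.choose_succ_self_right, one_apply_eq, if_neg (by omega)]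
    simp
  · rw [one_apply_ne h,
      Nat.choose_eq_ite_of_le (Nat.lt_succ_iff.1 (card_inter_lt_of_ne h))]
    simp

lemma downUp_posSemidef : ∀ j, (downUp α j).PosSemidef
  | 0 => PosSemidef.zero
  | j + 1 => by simpa [downUp] using posSemidef_self_mul_conjTranspose (W j)

lemma transpose_mul_inclusionMatrix_posDef {j : ℕ} (h : 2 * j < Fintype.card α) :
    ((W j)ᵀ * W j).PosDef := by
  have hpos : (0 : ℝ) < Fintype.card α - 2 * j := by
    rw [sub_pos]
    exact_mod_cast h
  rw [transpose_mul_inclusionMatrix, add_comm]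
  exact (PosDef.one.smul hpos).add_posSemidef (downUp_posSemidef j)

lemma mulVec_inclusionMatrix_injective {j : ℕ} (h : 2 * j < Fintype.card α) :
    Function.Injective (W j).mulVec := by
  have hinj := mulVec_injective_iff_isUnit.2 (transpose_mul_inclusionMatrix_posDef h).isUnit
  refine Function.Injective.of_comp (f := (W j)ᵀ.mulVec) ?_
  simpa only [Function.comp_def, mulVec_mulVec] using hinj

lemma rank_inclusionMatrix {j : ℕ} (h : 2 * j < Fintype.card α) :
    (W j).rank = (Fintype.card α).choose j := by
  rw [← rank_transpose_mul_self,
    rank_of_isUnit _ (transpose_mul_inclusionMatrix_posDef h).isUnit, card_level]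

open Module.End

lemma finrank_eigenspace_downUp_zero {i : ℕ} (h : 2 * i ≤ Fintype.card α + 1) :
    finrank ℝ (eigenspace (toLin' (downUp α i)) 0)
      = if i = 0 then 1 else (Fintype.card α).choose i - (Fintype.card α).choose (i - 1) := by
  rw [eigenspace_zero]
  cases i with
  | zero =>
    rw [downUp, map_zero, LinearMap.ker_zero, finrank_top, finrank_pi, card_level,
      Nat.choose_zero_right, if_pos rfl]
  | succ j =>
    have hrank : (downUp α (j + 1)).rank = (Fintype.card α).choose j := by
      rw [downUp, rank_self_mul_transpose, rank_inclusionMatrix (by omega)]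
    have hnullity := LinearMap.finrank_range_add_finrank_ker (downUp α (j + 1)).mulVecLin
    rw [← rank, hrank, finrank_pi, card_level] at hnullity
    rw [toLin'_apply', if_neg (Nat.succ_ne_zero j), Nat.add_sub_cancel]
    omega

lemma inclusionMatrix_mulVec_mem_eigenspace {j : ℕ} {μ : ℝ} {f : Level α j → ℝ}
    (hf : f ∈ eigenspace (toLin' (downUp α j)) μ) :
    W j *ᵥ f ∈ eigenspace (toLin' (downUp α (j + 1))) (μ + (Fintype.card α - 2 * j)) := by
  rw [mem_eigenspace_iff, toLin'_apply] at hf ⊢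
  rw [downUp, ← mulVec_mulVec, mulVec_mulVec f, transpose_mul_inclusionMatrix, add_mulVec, hf,
    smul_mulVec, one_mulVec, ← add_smul, mulVec_smul]

lemma finrank_eigenspace_downUp_le_succ {j : ℕ} (h : 2 * j < Fintype.card α) (μ : ℝ) :
    finrank ℝ (eigenspace (toLin' (downUp α j)) μ)
      ≤ finrank ℝ
          (eigenspace (toLin' (downUp α (j + 1))) (μ + (Fintype.card α - 2 * j))) := by
  refine LinearMap.finrank_le_finrank_of_injective
    (f := (toLin' (W j)).restrict fun _ => inclusionMatrix_mulVec_mem_eigenspace) ?_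
  intro f g hfg
  exact Subtype.ext (mulVec_inclusionMatrix_injective h (congrArg Subtype.val hfg))

lemma finrank_eigenspace_downUp_zero_le (i d : ℕ) (h : 2 * (i + d) ≤ Fintype.card α + 1) :
    finrank ℝ (eigenspace (toLin' (downUp α i)) 0)
      ≤ finrank ℝ (eigenspace (toLin' (downUp α (i + d)))
          (d * (Fintype.card α - 2 * i - d + 1))) := by
  induction d with
  | zero =>
    rw [CharP.cast_eq_zero, zero_mul]
    exact le_rfl
  | succ d ih =>
    have hμ : (d : ℝ) * (Fintype.card α - 2 * i - d + 1) + (Fintype.card α - 2 * (i + d : ℕ))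
        = (d + 1 : ℕ) * (Fintype.card α - 2 * i - (d + 1 : ℕ) + 1) := by
      push_cast
      ring
    have := (ih (by omega)).trans (finrank_eigenspace_downUp_le_succ (by omega) _)
    rwa [hμ] at this

lemma eigenspace_adjMatrix {m : ℕ} (hm : m ≠ 0) (μ : ℝ) :
    eigenspace (toLin' (adjMatrix α m)) (μ - m) = eigenspace (toLin' (downUp α m)) μ := by
  ext f
  simp only [mem_eigenspace_iff, toLin'_apply, adjMatrix_eq hm, sub_mulVec, smul_mulVec,
    one_mulVec, sub_smul, sub_left_inj]

lemma eigenvalue_injOn {n t : ℕ} (h : 2 * t ≤ n + 1) :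
    Set.InjOn (fun i : ℕ => (t : ℝ) * (n - t) - i * (n + 1 - i)) (range (t + 1)) := by
  intro i hi j hj hij
  simp only [coe_range, Set.mem_Iio] at hi hj
  have hfactor : ((i : ℝ) - j) * (n + 1 - i - j) = 0 := by
    simp only at hij
    linear_combination -hij
  rcases mul_eq_zero.1 hfactor with hij | hsum
  · exact_mod_cast sub_eq_zero.1 hij
  · have : i + j = n + 1 := by
      rw [← @Nat.cast_inj ℝ]
      push_cast
      linarith
    omega

lemma choose_sub_choose_le_finrank_eigenspace_adjMatrix {t i : ℕ} (ht1 : 1 ≤ t)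
    (ht2 : 2 * t ≤ Fintype.card α + 1) (hi : i ≤ t) :
    (if i = 0 then 1 else (Fintype.card α).choose i - (Fintype.card α).choose (i - 1))
      ≤ finrank ℝ (eigenspace (toLin' (adjMatrix α t))
          (t * (Fintype.card α - t) - i * (Fintype.card α + 1 - i))) := by
  obtain ⟨d, rfl⟩ := Nat.exists_eq_add_of_le hi
  have hμ : ((i + d : ℕ) : ℝ) * (Fintype.card α - (i + d : ℕ))
        - i * (Fintype.card α + 1 - i)
      = d * (Fintype.card α - 2 * i - d + 1) - (i + d : ℕ) := by
    push_cast
    ring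
  rw [← finrank_eigenspace_downUp_zero (by omega), hμ, eigenspace_adjMatrix (by omega)]
  exact finrank_eigenspace_downUp_zero_le i d ht2

end Johnson

open Finset Matrix Module Module.End Johnson in
/-- Spectrum of the Johnson graph `J(n,t)` for `1 ≤ t ≤ (n+1)/2`: for each
`0 ≤ i ≤ t`, the eigenspace of its adjacency matrix for the eigenvalue
`t(n-t) - i(n+1-i)` has dimension exactly `C(n,i) - C(n,i-1)` (with the
convention `C(n,-1) = 0`). -/
theorem johnson_graph_spectrum (n t : ℕ) (ht1 : 1 ≤ t) (ht2 : 2 * t ≤ n + 1) :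
    ∀ i : ℕ, i ≤ t →
      Module.finrank ℝ
          ↥(Module.End.eigenspace
              (Matrix.toLin'
                (Matrix.of fun S T : {S : Finset (Fin n) // S.card = t} =>
                  if (S.val ∩ T.val).card = t - 1 then (1 : ℝ) else 0))
              ((t : ℝ) * ((n : ℝ) - (t : ℝ)) - (i : ℝ) * ((n : ℝ) + 1 - (i : ℝ))))
        = if i = 0 then 1 else n.choose i - n.choose (i - 1) := by
  intro i hi
  let A := toLin' (adjMatrix (Fin n) t)
  let eig : ℕ → ℝ := fun j => t * (n - t) - j * (n + 1 - j)
  have hlow : ∀ j ∈ range (t + 1), (if j = 0 then 1 else n.choose j - n.choose (j - 1))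
      ≤ finrank ℝ (eigenspace A (eig j)) := fun j hj => by
    have := choose_sub_choose_le_finrank_eigenspace_adjMatrix (α := Fin n) ht1
      (by simpa using ht2) (Nat.lt_succ_iff.1 (mem_range.1 hj))
    rwa [Fintype.card_fin] at this
  have hup : ∑ j ∈ range (t + 1), finrank ℝ (eigenspace A (eig j))
      ≤ ∑ j ∈ range (t + 1), (if j = 0 then 1 else n.choose j - n.choose (j - 1)) :=
    calc ∑ j ∈ range (t + 1), finrank ℝ (eigenspace A (eig j))
        = ∑ μ ∈ (range (t + 1)).image eig, finrank ℝ (eigenspace A μ) :=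
          (sum_image (f := fun μ => finrank ℝ (eigenspace A μ)) (eigenvalue_injOn ht2)).symm
      _ ≤ finrank ℝ (Level (Fin n) t → ℝ) := (eigenspaces_iSupIndep A).sum_finrank_le _
      _ = _ := by rw [finrank_pi, card_level, Fintype.card_fin, Nat.sum_range_choose_sub_choose ht2]
  exact ((sum_eq_sum_iff_of_le hlow).1 (le_antisymm (sum_le_sum hlow) hup) i
    (mem_range.2 (Nat.lt_succ_of_le hi))).symm
end

section
/- Let n and t be integers with 1 ≤ t ≤ (n+1)/2. Let L_t denote the real vector space of homogeneous multilinear polynomials of degree t in variables x_1,…,x_n (spanned by the monomials x^S = Π_{i∈S} x_i for S ⊆ {1,…,n} with |S| = t), and let W_t : L_t → L_{t−1} be the linear map W_t p = Σ_{i=1}^n ∂p/∂x_i. Then the kernel of W_t has dimension C(n,t) − C(n,t−1). -/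
open MvPolynomial

/-- The space `L_t` of homogeneous multilinear degree-`t` polynomials in `n`
variables, i.e. the span of the monomials `x^S = Π_{i∈S} x_i` with `|S| = t`. -/
noncomputable def homogML (n t : ℕ) : Submodule ℝ (MvPolynomial (Fin n) ℝ) :=
  Submodule.span ℝ
    {p | ∃ S : Finset (Fin n), S.card = t ∧ p = ∏ i ∈ S, X i}

/-- The operator `W p = Σ_i ∂p/∂x_i`. -/
noncomputable def Wop (n : ℕ) :
    MvPolynomial (Fin n) ℝ →ₗ[ℝ] MvPolynomial (Fin n) ℝ :=
  ∑ i : Fin n, (pderiv i).toLinearMap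

/-! Writing `p = Σ_T f(T) x^T` identifies `L_t` with the real functions on the `t`-subsets of the
ground set, and turns `W` into the down operator `D f(T) = Σ_{i ∉ T} f(T ∪ {i})` on the Boolean
lattice, whose adjoint is the up operator `U g(T) = Σ_{i ∈ T} g(T ∖ {i})`. Counting gives
`DU - UD = n - 2k` on the `k`-th level, hence `‖U g‖² = ‖D g‖² + (n - 2k)‖g‖²`, so `U` is injective
on level `k` when `2k < n`. On level `t = k + 1` the kernel of `D` is the orthogonal complement of
`U(level k)`, which has dimension `C(n,t) - C(n,t-1)`. -/

open Finset

section BooleanLattice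

variable {α : Type*}

variable (α) in
def level (k : ℕ) : Submodule ℝ (EuclideanSpace ℝ (Finset α)) where
  carrier := {f | ∀ T : Finset α, #T ≠ k → f T = 0}
  zero_mem' _ _ := rfl
  add_mem' hf hg T hT := by simp [hf T hT, hg T hT]
  smul_mem' c f hf T hT := by simp [hf T hT]

variable (α) in
noncomputable def levelEquivFun (k : ℕ) :
    level α k ≃ₗ[ℝ] ({T : Finset α // #T = k} → ℝ) where
  toFun f T := f.1 T
  map_add' _ _ := rfl
  map_smul' _ _ := rfl
  invFun g := ⟨WithLp.toLp 2 fun T => if h : #T = k then g ⟨T, h⟩ else 0, fun _ hT => dif_neg hT⟩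
  left_inv := fun ⟨f, hf⟩ => Subtype.ext <| by
    ext T
    by_cases h : #T = k
    · simp [h]
    · simp [h, hf T h]
  right_inv g := funext fun T => dif_pos T.2

section Up

variable [DecidableEq α]

variable (α) in
noncomputable def upOp : EuclideanSpace ℝ (Finset α) →ₗ[ℝ] EuclideanSpace ℝ (Finset α) where
  toFun f := WithLp.toLp 2 fun T => ∑ i ∈ T, f (T.erase i)
  map_add' f g := by ext T; simp [sum_add_distrib]
  map_smul' c f := by ext T; simp [mul_sum]

theorem upOp_apply (f : EuclideanSpace ℝ (Finset α)) (T : Finset α) :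
    upOp α f T = ∑ i ∈ T, f (T.erase i) := rfl

theorem upOp_mem_level {k : ℕ} {f : EuclideanSpace ℝ (Finset α)} (hf : f ∈ level α k) :
    upOp α f ∈ level α (k + 1) := fun T hT =>
  sum_eq_zero fun i hi => hf _ (by have := card_pos.mpr ⟨i, hi⟩; rw [card_erase_of_mem hi]; omega)

end Up

variable [Fintype α]

theorem finrank_level (k : ℕ) :
    Module.finrank ℝ (level α k) = (Fintype.card α).choose k := by
  rw [(levelEquivFun α k).finrank_eq, Module.finrank_fintype_fun_eq_card,
    Fintype.card_finset_len]

variable [DecidableEq α]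

theorem sum_sum_erase_eq_sum_sum_compl {M : Type*} [AddCommMonoid M]
    (F : Finset α → α → M) :
    ∑ T : Finset α, ∑ i ∈ T, F (T.erase i) i = ∑ S : Finset α, ∑ i ∈ Sᶜ, F S i := by
  rw [sum_sigma', sum_sigma']
  refine sum_bij' (fun p _ => ⟨p.1.erase p.2, p.2⟩) (fun p _ => ⟨insert p.2 p.1, p.2⟩)
    ?_ ?_ ?_ ?_ fun _ _ => rfl
  all_goals rintro ⟨T, i⟩ h; simp_all [insert_erase]

variable (α) in
noncomputable def downOp : EuclideanSpace ℝ (Finset α) →ₗ[ℝ] EuclideanSpace ℝ (Finset α) where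
  toFun f := WithLp.toLp 2 fun T => ∑ i ∈ Tᶜ, f (insert i T)
  map_add' f g := by ext T; simp [sum_add_distrib]
  map_smul' c f := by ext T; simp [mul_sum]

theorem downOp_apply (f : EuclideanSpace ℝ (Finset α)) (T : Finset α) :
    downOp α f T = ∑ i ∈ Tᶜ, f (insert i T) := rfl

theorem downOp_mem_level {k : ℕ} {f : EuclideanSpace ℝ (Finset α)} (hf : f ∈ level α (k + 1)) :
    downOp α f ∈ level α k := fun T hT =>
  sum_eq_zero fun i hi => hf _ (by rw [card_insert_of_notMem (mem_compl.mp hi)]; omega)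

theorem inner_upOp_left (f g : EuclideanSpace ℝ (Finset α)) :
    inner ℝ (upOp α f) g = inner ℝ f (downOp α g) := by
  simp only [PiLp.inner_apply, RCLike.inner_apply, conj_trivial, upOp_apply, downOp_apply,
    sum_mul, mul_sum]
  rw [← sum_sum_erase_eq_sum_sum_compl fun S i => g (insert i S) * f S]
  exact sum_congr rfl fun T _ => sum_congr rfl fun i hi => by rw [insert_erase hi]

theorem downOp_upOp_apply (f : EuclideanSpace ℝ (Finset α)) (T : Finset α) :
    downOp α (upOp α f) T
      = upOp α (downOp α f) T + ((Fintype.card α : ℝ) - 2 * #T) * f T := by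
  simp only [downOp_apply, upOp_apply]
  have up_then_down : ∀ i ∈ Tᶜ, ∑ j ∈ insert i T, f ((insert i T).erase j)
      = f T + ∑ j ∈ T, f (insert i (T.erase j)) := by
    intro i hi
    rw [mem_compl] at hi
    rw [sum_insert hi, erase_insert hi]
    exact congrArg _ (sum_congr rfl fun j hj => by
      rw [erase_insert_of_ne (by rintro rfl; exact hi hj)])
  have down_then_up : ∀ j ∈ T, ∑ i ∈ (T.erase j)ᶜ, f (insert i (T.erase j))
      = f T + ∑ i ∈ Tᶜ, f (insert i (T.erase j)) := by
    intro j hj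
    rw [compl_erase, sum_insert (by simp [hj]), insert_erase hj]
  rw [sum_congr rfl up_then_down, sum_congr rfl down_then_up, sum_add_distrib, sum_add_distrib,
    sum_const, sum_const, sum_comm, card_compl, nsmul_eq_mul, nsmul_eq_mul,
    Nat.cast_sub (card_le_univ T)]
  ring

theorem norm_upOp_sq {k : ℕ} {f : EuclideanSpace ℝ (Finset α)} (hf : f ∈ level α k) :
    ‖upOp α f‖ ^ 2 = ‖downOp α f‖ ^ 2 + ((Fintype.card α : ℝ) - 2 * k) * ‖f‖ ^ 2 := by
  have hDU : inner ℝ f (downOp α (upOp α f))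
      = inner ℝ f (upOp α (downOp α f)) + ((Fintype.card α : ℝ) - 2 * k) * inner ℝ f f := by
    simp only [PiLp.inner_apply, RCLike.inner_apply, conj_trivial, mul_sum, ← sum_add_distrib]
    refine sum_congr rfl fun T _ => ?_
    rw [downOp_upOp_apply]
    by_cases hT : #T = k
    · rw [hT]; ring
    · rw [hf T hT]; ring
  rw [← real_inner_self_eq_norm_sq, ← real_inner_self_eq_norm_sq, ← real_inner_self_eq_norm_sq,
    inner_upOp_left, hDU, real_inner_comm, inner_upOp_left]

theorem upOp_domRestrict_injective {k : ℕ} (hk : 2 * k < Fintype.card α) :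
    Function.Injective ((upOp α).domRestrict (level α k)) := by
  refine (injective_iff_map_eq_zero _).mpr fun ⟨f, hf⟩ hUf => Subtype.ext ?_
  have hpos : (0 : ℝ) < Fintype.card α - 2 * k := by
    rw [sub_pos]; exact_mod_cast hk
  have hnorm := norm_upOp_sq hf
  rw [show upOp α f = 0 from hUf, norm_zero] at hnorm
  have : ‖f‖ ^ 2 = 0 := by nlinarith [sq_nonneg ‖downOp α f‖, sq_nonneg ‖f‖]
  simpa using this

theorem level_inf_ker_downOp (k : ℕ) :
    level α (k + 1) ⊓ LinearMap.ker (downOp α)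
      = ((level α k).map (upOp α))ᗮ ⊓ level α (k + 1) := by
  ext f
  simp only [Submodule.mem_inf, LinearMap.mem_ker, Submodule.mem_orthogonal, Submodule.mem_map,
    forall_exists_index, and_imp, forall_apply_eq_imp_iff₂]
  constructor
  · rintro ⟨hf, hDf⟩
    exact ⟨fun g _ => by rw [inner_upOp_left, hDf, inner_zero_right], hf⟩
  · rintro ⟨horth, hf⟩
    refine ⟨hf, inner_self_eq_zero (𝕜 := ℝ) |>.mp ?_⟩
    simpa only [inner_upOp_left] using horth _ (downOp_mem_level hf)

theorem finrank_level_inf_ker_downOp_add {k : ℕ} (hk : 2 * k < Fintype.card α) :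
    Module.finrank ℝ ↥(level α (k + 1) ⊓ LinearMap.ker (downOp α)) + (Fintype.card α).choose k
      = (Fintype.card α).choose (k + 1) := by
  have hup : (level α k).map (upOp α) ≤ level α (k + 1) :=
    Submodule.map_le_iff_le_comap.mpr fun _ => upOp_mem_level
  have hrank : Module.finrank ℝ ((level α k).map (upOp α)) = (Fintype.card α).choose k := by
    rw [← LinearMap.range_domRestrict,
      LinearMap.finrank_range_of_inj (upOp_domRestrict_injective hk), finrank_level]
  rw [level_inf_ker_downOp, add_comm, ← hrank, Submodule.finrank_add_inf_finrank_orthogonal hup,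
    finrank_level]

end BooleanLattice

section Multilinear

variable {σ : Type*}

section

variable {R : Type*} [CommSemiring R]

theorem pderiv_prod_X_of_notMem {i : σ} {S : Finset σ} (hi : i ∉ S) :
    pderiv i (∏ j ∈ S, (X j : MvPolynomial σ R)) = 0 := by
  classical
  induction S using Finset.induction_on with
  | empty => simp
  | insert j S hj ih =>
    rw [mem_insert, not_or] at hi
    rw [prod_insert hj, pderiv_mul, pderiv_X_of_ne (Ne.symm hi.1), ih hi.2]
    simp

variable [DecidableEq σ]

theorem pderiv_prod_X (i : σ) (S : Finset σ) :
    pderiv i (∏ j ∈ S, (X j : MvPolynomial σ R))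
      = if i ∈ S then ∏ j ∈ S.erase i, X j else 0 := by
  split_ifs with hi
  · rw [← mul_prod_erase S _ hi, pderiv_mul, pderiv_X_self,
      pderiv_prod_X_of_notMem (notMem_erase i S)]
    simp
  · exact pderiv_prod_X_of_notMem hi

theorem Finsupp.indicator_one_inj {S T : Finset σ} :
    Finsupp.indicator S (fun _ _ => (1 : ℕ)) = Finsupp.indicator T (fun _ _ => 1) ↔ S = T := by
  refine ⟨fun h => Finset.ext fun j => ?_, fun h => h ▸ rfl⟩
  have hj := DFunLike.congr_fun h j
  rw [Finsupp.indicator_apply, Finsupp.indicator_apply] at hj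
  by_cases hS : j ∈ S <;> by_cases hT : j ∈ T <;> simp [hS, hT] at hj ⊢

theorem coeff_indicator_prod_X (S T : Finset σ) :
    coeff (Finsupp.indicator S fun _ _ => 1) (∏ j ∈ T, (X j : MvPolynomial σ R))
      = if S = T then 1 else 0 := by
  simpa [Finsupp.indicator_one_inj] using coeff_prod_X_pow (R := R)
    (Finsupp.indicator S fun _ _ => 1) (fun _ => 1) T

end

variable [Fintype σ]

noncomputable def toMultilinearPoly : EuclideanSpace ℝ (Finset σ) →ₗ[ℝ] MvPolynomial σ ℝ where
  toFun f := ∑ T, f T • ∏ i ∈ T, X i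
  map_add' f g := by simp [add_smul, sum_add_distrib]
  map_smul' c f := by simp [smul_sum, smul_smul]

theorem toMultilinearPoly_apply (f : EuclideanSpace ℝ (Finset σ)) :
    toMultilinearPoly f = ∑ T, f T • ∏ i ∈ T, (X i : MvPolynomial σ ℝ) := rfl

variable [DecidableEq σ] in
theorem coeff_indicator_toMultilinearPoly (f : EuclideanSpace ℝ (Finset σ)) (S : Finset σ) :
    coeff (Finsupp.indicator S fun _ _ => 1) (toMultilinearPoly f) = f S := by
  simp [toMultilinearPoly_apply, coeff_sum, coeff_indicator_prod_X]

theorem toMultilinearPoly_injective :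
    Function.Injective (toMultilinearPoly : EuclideanSpace ℝ (Finset σ) →ₗ[ℝ] _) := by
  classical
  exact fun f g h => PiLp.ext fun S => by
    rw [← coeff_indicator_toMultilinearPoly f, h, coeff_indicator_toMultilinearPoly]

end Multilinear

theorem Wop_prod_X {n : ℕ} (T : Finset (Fin n)) :
    Wop n (∏ j ∈ T, X j) = ∑ i ∈ T, ∏ j ∈ T.erase i, X j := by
  simp [Wop, LinearMap.sum_apply, pderiv_prod_X]

theorem Wop_toMultilinearPoly {n : ℕ} (f : EuclideanSpace ℝ (Finset (Fin n))) :
    Wop n (toMultilinearPoly f) = toMultilinearPoly (downOp (Fin n) f) := by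
  simp only [toMultilinearPoly_apply, map_sum, map_smul, Wop_prod_X, smul_sum, downOp_apply,
    sum_smul]
  rw [← sum_sum_erase_eq_sum_sum_compl
    fun S i => f (insert i S) • ∏ j ∈ S, (X j : MvPolynomial (Fin n) ℝ)]
  exact sum_congr rfl fun T _ => sum_congr rfl fun i hi => by rw [insert_erase hi]

theorem map_toMultilinearPoly_level (n t : ℕ) :
    (level (Fin n) t).map toMultilinearPoly = homogML n t := by
  apply le_antisymm
  · rintro _ ⟨f, hf, rfl⟩
    rw [toMultilinearPoly_apply]
    refine Submodule.sum_mem _ fun T _ => ?_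
    by_cases hT : #T = t
    · exact Submodule.smul_mem _ _ (Submodule.subset_span ⟨T, hT, rfl⟩)
    · rw [hf T hT, zero_smul]
      exact Submodule.zero_mem _
  · rw [homogML, Submodule.span_le]
    rintro _ ⟨S, hS, rfl⟩
    refine ⟨EuclideanSpace.single S 1, fun T hT => ?_, ?_⟩
    · simp [show T ≠ S by rintro rfl; exact hT hS]
    · simp [toMultilinearPoly_apply, ite_smul]

theorem homogML_inf_ker_Wop (n t : ℕ) :
    homogML n t ⊓ LinearMap.ker (Wop n)
      = (level (Fin n) t ⊓ LinearMap.ker (downOp (Fin n))).map toMultilinearPoly := by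
  have hcomm : Wop n ∘ₗ toMultilinearPoly = toMultilinearPoly ∘ₗ downOp (Fin n) :=
    LinearMap.ext Wop_toMultilinearPoly
  rw [← map_toMultilinearPoly_level, Submodule.map_inf_eq_map_inf_comap, ← LinearMap.ker_comp,
    hcomm, LinearMap.ker_comp_of_ker_eq_bot _
      (LinearMap.ker_eq_bot.mpr toMultilinearPoly_injective)]

/-- For `1 ≤ t ≤ (n+1)/2`, the kernel of `W_t : L_t → L_{t-1}` has dimension
`C(n,t) - C(n,t-1)`. -/
theorem ker_Wt_dim (n t : ℕ) (ht1 : 1 ≤ t) (ht2 : 2 * t ≤ n + 1) :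
    Module.finrank ℝ ↥(homogML n t ⊓ LinearMap.ker (Wop n))
      = n.choose t - n.choose (t - 1) := by
  obtain ⟨k, rfl⟩ := Nat.exists_eq_add_of_le' ht1
  have hdim := finrank_level_inf_ker_downOp_add (α := Fin n) (k := k) (by rw [Fintype.card_fin]; omega)
  rw [Fintype.card_fin] at hdim
  rw [homogML_inf_ker_Wop,
    ← (Submodule.equivMapOfInjective _ toMultilinearPoly_injective _).finrank_eq,
    Nat.add_sub_cancel]
  omega
end

section
/- Let n and t be integers with 1 ≤ t ≤ n/2. Let L_t be the real vector space of homogeneous multilinear degree-t polynomials in x_1,…,x_n and let W_t : L_t → L_{t−1} be given by W_t p = Σ_{i=1}^n ∂p/∂x_i. Then the kernel of W_t equals the linear span of the polynomials p_A(x) = Π_{i=1}^{t} (x_{a(2i−1)} − x_{a(2i)}), taken over all arrays A = (a(1), a(2), …, a(2t)) of 2t pairwise distinct indices in {1,…,n}. In particular, each such product of differences lies in Ker(W_t), and together they span it. -/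
open MvPolynomial

/-!
Write `D_V = ∑_{i ∈ V} ∂_i` and split a multilinear form `f` of degree `t + 1` in the
variables `V ∪ {v}` as `f = x_v q + r`, with `q` and `r` free of `x_v`. Then
`D_{V ∪ {v}} f = x_v D_V q + (q + D_V r)`, so `D f = 0` forces `D_V q = 0`. By induction on `t`,
`q` is a combination of difference products on `V`; multiplying each of them by `x_v - x_j`, for
an index `j ∈ V` it does not use, gives a `g` in the span with the same `x_v`-part as `f`, and
`f - g` is a form in the variables `V` alone, which is handled by induction on `V`.

A fresh index `j` exists as long as `2t < |V|`. Below that threshold the kernel is zero: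
`D_V^k` is injective on multilinear forms of degree `t` whenever `|V| + k ≤ 2t`, which follows
from the same splitting by induction on `V`.
-/

open Finset

theorem Derivation.map_prod_eq_zero {R A ι : Type*} [CommSemiring R] [CommSemiring A]
    [Algebra R A] (D : Derivation R A A) {s : Finset ι} {f : ι → A}
    (h : ∀ i ∈ s, D (f i) = 0) : D (∏ i ∈ s, f i) = 0 :=
  prod_induction f (D · = 0) (fun a b ha hb => by simp [D.leibniz, ha, hb])
    D.map_one_eq_zero h

namespace MvPolynomial

variable {σ R : Type*} [CommRing R]

theorem pderiv_commute (i j : σ) :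
    Function.Commute (pderiv i : MvPolynomial σ R → _) (pderiv j) := by
  classical
  have h : ⁅(pderiv i : Derivation R (MvPolynomial σ R) _), pderiv j⁆ = 0 :=
    derivation_ext fun k => by
      rw [Derivation.commutator_apply, pderiv_X, pderiv_X, Pi.single_apply, Pi.single_apply]
      split_ifs <;> simp
  intro p
  rw [← sub_eq_zero, ← Derivation.commutator_apply, h, Derivation.zero_apply]

variable (R) in
noncomputable def homogMLOn (V : Finset σ) (t : ℕ) : Submodule R (MvPolynomial σ R) :=
  Submodule.span R {p | ∃ S ⊆ V, #S = t ∧ p = ∏ i ∈ S, X i}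

variable (R) in
noncomputable def pderivSum (V : Finset σ) :
    Derivation R (MvPolynomial σ R) (MvPolynomial σ R) :=
  ∑ i ∈ V, pderiv i

variable (R) in
def diffProducts (V : Finset σ) (t : ℕ) : Set (MvPolynomial σ R) :=
  {p | ∃ a b : Fin t → σ, Function.Injective a ∧ Function.Injective b ∧
    (∀ i j, a i ≠ b j) ∧ (∀ i, a i ∈ V ∧ b i ∈ V) ∧ p = ∏ i, (X (a i) - X (b i))}

theorem homogMLOn_mono {V W : Finset σ} (h : V ⊆ W) (t : ℕ) :
    homogMLOn R V t ≤ homogMLOn R W t :=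
  Submodule.span_mono fun _ ⟨S, hS, hcard, hp⟩ => ⟨S, hS.trans h, hcard, hp⟩

theorem homogMLOn_eq_bot_of_card_lt {V : Finset σ} {t : ℕ} (h : #V < t) :
    homogMLOn R V t = ⊥ :=
  Submodule.span_eq_bot.mpr fun _ ⟨S, hS, hcard, _⟩ =>
    absurd (card_le_card hS) (by omega)

theorem pderiv_eq_zero_of_mem_homogMLOn {V : Finset σ} {v : σ} (hv : v ∉ V) {t : ℕ}
    {p : MvPolynomial σ R} (hp : p ∈ homogMLOn R V t) : pderiv v p = 0 := by
  have : homogMLOn R V t ≤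
      LinearMap.ker (pderiv v : Derivation R (MvPolynomial σ R) _).toLinearMap := by
    rw [homogMLOn, Submodule.span_le]
    rintro _ ⟨S, hS, -, rfl⟩
    exact (pderiv v).map_prod_eq_zero fun i hi => pderiv_X_of_ne fun h => hv (h ▸ hS hi)
  exact this hp

theorem pderivSum_apply (V : Finset σ) (p : MvPolynomial σ R) :
    pderivSum R V p = ∑ i ∈ V, pderiv i p := by
  rw [pderivSum, ← Derivation.coeFnAddMonoidHom_apply, map_sum, Finset.sum_apply]
  rfl

theorem pderiv_iterate_pderivSum_eq_zero (V : Finset σ) {v : σ} {p : MvPolynomial σ R}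
    (hp : pderiv v p = 0) (k : ℕ) : pderiv v ((pderivSum R V)^[k] p) = 0 := by
  have hcomm : Function.Commute (pderiv v : MvPolynomial σ R → _) (pderivSum R V) := fun p => by
    simp only [pderivSum_apply, map_sum, pderiv_commute v _ p]
  rw [(hcomm.iterate_right k).eq, hp, iterate_map_zero]

theorem X_mul_add_eq_zero {v : σ} {A B : MvPolynomial σ R} (hA : pderiv v A = 0)
    (hB : pderiv v B = 0) (h : X v * A + B = 0) : A = 0 ∧ B = 0 := by
  have hA0 : A = 0 := by simpa [Derivation.leibniz, hA, hB] using congr_arg (pderiv v) h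
  exact ⟨hA0, by simpa [hA0] using h⟩

theorem diffProducts_mono {V W : Finset σ} (h : V ⊆ W) (t : ℕ) :
    diffProducts R V t ⊆ diffProducts R W t :=
  fun _ ⟨a, b, ha, hb, hab, hV, hp⟩ =>
    ⟨a, b, ha, hb, hab, fun i => ⟨h (hV i).1, h (hV i).2⟩, hp⟩

variable [DecidableEq σ]

theorem X_mul_mem_homogMLOn {V : Finset σ} {j : σ} (hj : j ∉ V) {t : ℕ}
    {p : MvPolynomial σ R} (hp : p ∈ homogMLOn R V t) :
    X j * p ∈ homogMLOn R (insert j V) (t + 1) := by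
  have : (homogMLOn R V t).map (LinearMap.mulLeft R (X j)) ≤
      homogMLOn R (insert j V) (t + 1) := by
    rw [homogMLOn, Submodule.map_span, Submodule.span_le]
    rintro _ ⟨_, ⟨S, hS, rfl, rfl⟩, rfl⟩
    have hjS : j ∉ S := fun h => hj (hS h)
    exact Submodule.subset_span ⟨insert j S, insert_subset_insert j hS,
      card_insert_of_notMem hjS, (prod_insert hjS).symm⟩
  exact this (Submodule.mem_map_of_mem hp)

theorem exists_eq_X_mul_add {V : Finset σ} {v : σ} {t : ℕ} {f : MvPolynomial σ R}
    (hf : f ∈ homogMLOn R (insert v V) (t + 1)) :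
    ∃ q ∈ homogMLOn R V t, ∃ r ∈ homogMLOn R V (t + 1), f = X v * q + r := by
  suffices homogMLOn R (insert v V) (t + 1) ≤
      (homogMLOn R V t).map (LinearMap.mulLeft R (X v)) ⊔ homogMLOn R V (t + 1) by
    obtain ⟨_, ⟨q, hq, rfl⟩, r, hr, rfl⟩ := Submodule.mem_sup.mp (this hf)
    exact ⟨q, hq, r, hr, rfl⟩
  rw [homogMLOn, Submodule.span_le]
  rintro _ ⟨S, hS, hcard, rfl⟩
  by_cases hvS : v ∈ S
  · refine Submodule.mem_sup_left ⟨∏ i ∈ S.erase v, X i,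
      Submodule.subset_span ⟨S.erase v, ?_, by rw [card_erase_of_mem hvS, hcard]; rfl, rfl⟩,
      mul_prod_erase S X hvS⟩
    exact fun i hi => (mem_insert.mp (hS (mem_of_mem_erase hi))).resolve_left (ne_of_mem_erase hi)
  · exact Submodule.mem_sup_right (Submodule.subset_span
      ⟨S, (subset_insert_iff_of_notMem hvS).mp hS, hcard, rfl⟩)

theorem pderivSum_X (V : Finset σ) (j : σ) :
    pderivSum R V (X j) = if j ∈ V then 1 else 0 := by
  simp [pderivSum_apply, pderiv_X]

theorem pderivSum_insert_of_pderiv_eq_zero {V : Finset σ} {v : σ} (hv : v ∉ V)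
    {p : MvPolynomial σ R} (hp : pderiv v p = 0) :
    pderivSum R (insert v V) p = pderivSum R V p := by
  rw [pderivSum_apply, pderivSum_apply, sum_insert hv, hp, zero_add]

theorem iterate_pderivSum_insert_of_pderiv_eq_zero {V : Finset σ} {v : σ} (hv : v ∉ V)
    {p : MvPolynomial σ R} (hp : pderiv v p = 0) (k : ℕ) :
    (pderivSum R (insert v V))^[k] p = (pderivSum R V)^[k] p := by
  induction k with
  | zero => rfl
  | succ k ih =>
    rw [Function.iterate_succ_apply', Function.iterate_succ_apply', ih,
      pderivSum_insert_of_pderiv_eq_zero hv (pderiv_iterate_pderivSum_eq_zero V hp k)]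

theorem pderivSum_insert_X_mul {V : Finset σ} {v : σ} (hv : v ∉ V) {q : MvPolynomial σ R}
    (hq : pderiv v q = 0) :
    pderivSum R (insert v V) (X v * q) = X v * pderivSum R V q + q := by
  rw [Derivation.leibniz, pderivSum_insert_of_pderiv_eq_zero hv hq, pderivSum_X,
    if_pos (mem_insert_self v V), smul_eq_mul, smul_eq_mul, mul_one]

theorem iterate_pderivSum_insert_X_mul {V : Finset σ} {v : σ} (hv : v ∉ V)
    {q : MvPolynomial σ R} (hq : pderiv v q = 0) (k : ℕ) :
    (pderivSum R (insert v V))^[k + 1] (X v * q) =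
      X v * (pderivSum R V)^[k + 1] q + (k + 1) • (pderivSum R V)^[k] q := by
  induction k with
  | zero => simp [pderivSum_insert_X_mul hv hq]
  | succ k ih =>
    rw [Function.iterate_succ_apply', ih, map_add, map_nsmul,
      pderivSum_insert_X_mul hv (pderiv_iterate_pderivSum_eq_zero V hq _),
      pderivSum_insert_of_pderiv_eq_zero hv (pderiv_iterate_pderivSum_eq_zero V hq _),
      ← Function.iterate_succ_apply' (pderivSum R V),
      ← Function.iterate_succ_apply' (pderivSum R V), succ_nsmul' _ (k + 1), add_assoc]

/- With `f = x_v q + r`, the iterate splits as `x_v D^{k+1} q + ((k+1) D^k q + D^{k+1} r)`: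
both parts vanish, so `D^{k+1} q = 0`, then `D^{k+2} r = 0` kills `r` (more iterations, same
degree) and finally `D^k q = 0` kills `q` (fewer iterations, lower degree). -/
theorem eq_zero_of_iterate_pderivSum_eq_zero [IsAddTorsionFree R] {V : Finset σ} :
    ∀ {t k : ℕ} {f : MvPolynomial σ R}, #V + k ≤ 2 * t → f ∈ homogMLOn R V t →
      (pderivSum R V)^[k] f = 0 → f = 0 := by
  induction V using Finset.induction_on with
  | empty =>
    intro t k f hk hf hD
    rcases k with _ | k
    · exact hD
    · rwa [homogMLOn_eq_bot_of_card_lt (by simp; omega), Submodule.mem_bot] at hf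
  | insert v V hv ih =>
    intro t k f hk hf hD
    rcases k with _ | m
    · exact hD
    obtain ⟨s, rfl⟩ : ∃ s, t = s + 1 := Nat.exists_eq_add_one.mpr (by omega)
    rw [card_insert_of_notMem hv] at hk
    obtain ⟨q, hq, r, hr, rfl⟩ := exists_eq_X_mul_add hf
    have hq' := pderiv_eq_zero_of_mem_homogMLOn hv hq
    have hr' := pderiv_eq_zero_of_mem_homogMLOn hv hr
    rw [iterate_map_add, iterate_pderivSum_insert_X_mul hv hq',
      iterate_pderivSum_insert_of_pderiv_eq_zero hv hr', add_assoc] at hD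
    obtain ⟨hq1, hqr⟩ := X_mul_add_eq_zero (pderiv_iterate_pderivSum_eq_zero V hq' _)
      (by rw [map_add, map_nsmul, pderiv_iterate_pderivSum_eq_zero V hq',
        pderiv_iterate_pderivSum_eq_zero V hr', smul_zero, zero_add]) hD
    have hr0 : r = 0 := ih (k := m + 2) (by omega) hr (by
      have := congr_arg (pderivSum R V) hqr
      rwa [map_add, map_nsmul, ← Function.iterate_succ_apply' (pderivSum R V), hq1, smul_zero,
        zero_add, ← Function.iterate_succ_apply' (pderivSum R V), map_zero] at this)
    rw [hr0, iterate_map_zero, add_zero] at hqr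
    have hq0 : q = 0 :=
      ih (k := m) (by omega) hq ((smul_eq_zero.mp hqr).resolve_left m.succ_ne_zero)
    rw [hq0, hr0, mul_zero, add_zero]

theorem span_diffProducts_le_ker (V : Finset σ) (t : ℕ) :
    Submodule.span R (diffProducts R V t) ≤ LinearMap.ker (pderivSum R V).toLinearMap := by
  rw [Submodule.span_le]
  rintro _ ⟨a, b, -, -, -, hV, rfl⟩
  refine (pderivSum R V).map_prod_eq_zero fun i _ => ?_
  rw [Derivation.map_sub, pderivSum_X, pderivSum_X, if_pos (hV i).1, if_pos (hV i).2, sub_self]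

theorem prod_X_sub_X_mem_homogMLOn {t : ℕ} {a b : Fin t → σ} {V : Finset σ}
    (ha : Function.Injective a) (hb : Function.Injective b) (hab : ∀ i j, a i ≠ b j)
    (hV : ∀ i, a i ∈ V ∧ b i ∈ V) :
    ∏ i, (X (a i) - X (b i) : MvPolynomial σ R) ∈ homogMLOn R V t := by
  induction t generalizing V with
  | zero => exact Submodule.subset_span ⟨∅, empty_subset V, rfl, by simp⟩
  | succ t ih =>
    set W := (V.erase (a 0)).erase (b 0)
    have hP := ih (V := W) (ha.comp (Fin.succ_injective t)) (hb.comp (Fin.succ_injective t))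
      (fun i j => hab _ _) fun i => by
        simp [W, hab, (hab _ _).symm, ha.ne (Fin.succ_ne_zero i), hb.ne (Fin.succ_ne_zero i), hV]
    have hWV : W ⊆ V := (erase_subset _ _).trans (erase_subset _ _)
    rw [Fin.prod_univ_succ, sub_mul]
    exact Submodule.sub_mem _
      (homogMLOn_mono (insert_subset (hV 0).1 hWV) _
        (X_mul_mem_homogMLOn (fun h => ne_of_mem_erase (mem_of_mem_erase h) rfl) hP))
      (homogMLOn_mono (insert_subset (hV 0).2 hWV) _ (X_mul_mem_homogMLOn (notMem_erase _ _) hP))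

theorem exists_sub_X_mul_mem_homogMLOn {V : Finset σ} {v : σ} (hv : v ∉ V) {t : ℕ}
    (hV : 2 * t < #V) {q : MvPolynomial σ R} (hq : q ∈ Submodule.span R (diffProducts R V t)) :
    ∃ g ∈ Submodule.span R (diffProducts R (insert v V) (t + 1)),
      g - X v * q ∈ homogMLOn R V (t + 1) := by
  induction hq using Submodule.span_induction with
  | zero => exact ⟨0, zero_mem _, by simp⟩
  | add x y _ _ hx hy =>
    obtain ⟨g, hg, hgx⟩ := hx
    obtain ⟨g', hg', hgy⟩ := hy
    refine ⟨g + g', add_mem hg hg', ?_⟩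
    rw [mul_add, add_sub_add_comm]
    exact add_mem hgx hgy
  | smul c x _ hx =>
    obtain ⟨g, hg, hgx⟩ := hx
    refine ⟨c • g, Submodule.smul_mem _ c hg, ?_⟩
    rw [mul_smul_comm, ← smul_sub]
    exact Submodule.smul_mem _ c hgx
  | mem _ hq =>
    obtain ⟨a, b, ha, hb, hab, hV', rfl⟩ := hq
    have hcard : #(univ.image a ∪ univ.image b) < #V := by
      have := card_union_le (univ.image a) (univ.image b)
      have := card_image_le (s := univ) (f := a)
      have := card_image_le (s := univ) (f := b)
      simp only [card_univ, Fintype.card_fin] at *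
      omega
    obtain ⟨j, hjV, hj⟩ := exists_mem_notMem_of_card_lt_card hcard
    simp only [mem_union, mem_image, mem_univ, true_and, not_or, not_exists] at hj
    refine ⟨(X v - X j) * ∏ i, (X (a i) - X (b i)), Submodule.subset_span
      ⟨Fin.cons v a, Fin.cons j b, ?_, ?_, ?_, ?_, by simp [Fin.prod_univ_succ]⟩, ?_⟩
    · exact Fin.cons_injective_iff.mpr ⟨fun ⟨i, hi⟩ => hv (hi ▸ (hV' i).1), ha⟩
    · exact Fin.cons_injective_iff.mpr ⟨fun ⟨i, hi⟩ => hj.2 i hi, hb⟩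
    · simp only [Fin.forall_fin_succ, Fin.cons_zero, Fin.cons_succ]
      exact ⟨⟨fun h => hv (h ▸ hjV), fun i h => hv (h ▸ (hV' i).2)⟩,
        fun i => ⟨fun h => hj.1 i h, hab i⟩⟩
    · simp only [Fin.forall_fin_succ, Fin.cons_zero, Fin.cons_succ]
      exact ⟨⟨mem_insert_self v V, mem_insert_of_mem hjV⟩,
        fun i => ⟨mem_insert_of_mem (hV' i).1, mem_insert_of_mem (hV' i).2⟩⟩
    · rw [sub_mul, sub_sub_cancel_left, ← insert_erase hjV]
      refine neg_mem (X_mul_mem_homogMLOn (notMem_erase j V)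
        (prod_X_sub_X_mem_homogMLOn ha hb hab fun i => ?_))
      exact ⟨mem_erase.mpr ⟨fun h => hj.1 i h, (hV' i).1⟩,
        mem_erase.mpr ⟨fun h => hj.2 i h, (hV' i).2⟩⟩

theorem mem_span_diffProducts [IsAddTorsionFree R] {t : ℕ} :
    ∀ {V : Finset σ} {f : MvPolynomial σ R}, f ∈ homogMLOn R V t → pderivSum R V f = 0 →
      f ∈ Submodule.span R (diffProducts R V t) := by
  induction t with
  | zero =>
    intro V f hf _
    refine (Submodule.span_le.mpr ?_ : homogMLOn R V 0 ≤ _) hf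
    rintro _ ⟨S, -, hS, rfl⟩
    rw [card_eq_zero.mp hS, prod_empty]
    exact Submodule.subset_span ⟨Fin.elim0, Fin.elim0, Function.injective_of_subsingleton _,
      Function.injective_of_subsingleton _, fun i => i.elim0, fun i => i.elim0, by simp⟩
  | succ s ih =>
    intro V
    induction V using Finset.induction_on with
    | empty =>
      intro f hf _
      rw [homogMLOn_eq_bot_of_card_lt (by simp), Submodule.mem_bot] at hf
      exact hf ▸ zero_mem _
    | insert v V hv ihV =>
      intro f hf hD
      by_cases hsmall : #(insert v V) < 2 * (s + 1)
      · rw [eq_zero_of_iterate_pderivSum_eq_zero (k := 1) (by omega) hf hD]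
        exact zero_mem _
      rw [card_insert_of_notMem hv] at hsmall
      obtain ⟨q, hq, r, hr, rfl⟩ := exists_eq_X_mul_add hf
      have hq' := pderiv_eq_zero_of_mem_homogMLOn hv hq
      have hr' := pderiv_eq_zero_of_mem_homogMLOn hv hr
      have hDq : pderivSum R V q = 0 := by
        have h := hD
        rw [map_add, pderivSum_insert_X_mul hv hq', pderivSum_insert_of_pderiv_eq_zero hv hr',
          add_assoc] at h
        refine (X_mul_add_eq_zero (pderiv_iterate_pderivSum_eq_zero V hq' 1) ?_ h).1
        rw [map_add, hq', zero_add]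
        exact pderiv_iterate_pderivSum_eq_zero V hr' 1
      obtain ⟨g, hg, hgq⟩ := exists_sub_X_mul_mem_homogMLOn hv (by omega) (ih hq hDq)
      have hh : X v * q + r - g ∈ homogMLOn R V (s + 1) := by
        rw [show X v * q + r - g = r - (g - X v * q) by ring]
        exact sub_mem hr hgq
      have hDg : pderivSum R (insert v V) g = 0 := span_diffProducts_le_ker _ _ hg
      have hDh : pderivSum R V (X v * q + r - g) = 0 := by
        rw [← pderivSum_insert_of_pderiv_eq_zero hv (pderiv_eq_zero_of_mem_homogMLOn hv hh),
          map_sub, hD, hDg, sub_zero]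
      rw [← sub_add_cancel (X v * q + r) g]
      exact add_mem (Submodule.span_mono (diffProducts_mono (subset_insert v V) _) (ihV hh hDh)) hg

theorem homogMLOn_inf_ker_pderivSum [IsAddTorsionFree R] (V : Finset σ) (t : ℕ) :
    homogMLOn R V t ⊓ LinearMap.ker (pderivSum R V).toLinearMap =
      Submodule.span R (diffProducts R V t) := by
  refine le_antisymm (fun f ⟨hf, hD⟩ => mem_span_diffProducts hf hD) ?_
  refine le_inf (Submodule.span_le.mpr ?_) (span_diffProducts_le_ker V t)
  rintro _ ⟨a, b, ha, hb, hab, hV, rfl⟩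
  exact prod_X_sub_X_mem_homogMLOn ha hb hab hV

end MvPolynomial

theorem ker_Wt_span_general (n t : ℕ) :
    homogML n t ⊓ LinearMap.ker (Wop n)
      = Submodule.span ℝ
          {p | ∃ a b : Fin t → Fin n,
            Function.Injective a ∧ Function.Injective b ∧
            (∀ i j, a i ≠ b j) ∧
            p = ∏ i : Fin t, (X (a i) - X (b i))} := by
  have hML : homogML n t = homogMLOn ℝ univ t := by simp [homogML, homogMLOn]
  have hW : Wop n = (pderivSum ℝ (univ : Finset (Fin n))).toLinearMap :=
    LinearMap.ext fun p => by simp [Wop, pderivSum_apply]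
  have hD : diffProducts ℝ univ t = {p | ∃ a b : Fin t → Fin n,
      Function.Injective a ∧ Function.Injective b ∧ (∀ i j, a i ≠ b j) ∧
      p = ∏ i : Fin t, (X (a i) - X (b i))} := by
    simp [diffProducts]
  rw [hML, hW, homogMLOn_inf_ker_pderivSum, hD]

/-- For `1 ≤ t ≤ n/2`, the kernel of `W_t : L_t → L_{t-1}` is the span of the
products of differences `Π_{i=1}^{t} (x_{a(2i-1)} - x_{a(2i)})` over all choices
of `2t` pairwise distinct indices. -/
theorem ker_Wt_span (n t : ℕ) (ht1 : 1 ≤ t) (ht2 : 2 * t ≤ n) :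
    homogML n t ⊓ LinearMap.ker (Wop n)
      = Submodule.span ℝ
          {p | ∃ a b : Fin t → Fin n,
            Function.Injective a ∧ Function.Injective b ∧
            (∀ i j, a i ≠ b j) ∧
            p = ∏ i : Fin t, (X (a i) - X (b i))} :=
  ker_Wt_span_general n t
end
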